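/- arXiv:1203.1943 — 6 statements merged into one kernel-verified Lean document; each statement's English description precedes it below -/
import Mathlib

section
/- Let k be a field, Q a finite acyclic quiver with vertex set V, and B := MonoidAlgebra k HK(Q). Then the one-dimensional B-modules E_M, for M ranging over the subsets of V, form a complete and irredundant list of the simple B-modules: E_M and E_N are non-isomorphic for M ≠ N, and every simple B-module is isomorphic to E_M for some M ⊆ V. In particular B is a basic algebra with exactly 2^{|V|} isomorphism classes of simple modules, all one-dimensional. -/
set_option linter.unusedVariables false

/-- The defining relations of the Hecke–Kiselman monoid of a quiver with
vertex type `V` and arrow relation `arr`. -/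
inductive HKRel {V : Type} (arr : V → V → Prop) : FreeMonoid V → FreeMonoid V → Prop
  | idem (t : V) :
      HKRel arr (FreeMonoid.of t * FreeMonoid.of t) (FreeMonoid.of t)
  | braid (s t : V) :
      HKRel arr (FreeMonoid.of s * FreeMonoid.of t * FreeMonoid.of s)
        (FreeMonoid.of t * FreeMonoid.of s * FreeMonoid.of t)
  | absorb (s t : V) : ¬ arr t s →
      HKRel arr (FreeMonoid.of t * FreeMonoid.of s * FreeMonoid.of t)
        (FreeMonoid.of s * FreeMonoid.of t)

/-- The congruence on the free monoid generated by the Hecke–Kiselman relations. -/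
def HKCon {V : Type} (arr : V → V → Prop) : Con (FreeMonoid V) := conGen (HKRel arr)

/-- The Hecke–Kiselman monoid of the quiver `(V, arr)`. -/
abbrev HK {V : Type} (arr : V → V → Prop) : Type := (HKCon arr).Quotient

/-- The generator of the Hecke–Kiselman monoid attached to the vertex `t`. -/
def HK.x {V : Type} (arr : V → V → Prop) (t : V) : HK arr :=
  (HKCon arr).mk' (FreeMonoid.of t)

/-- The quiver `(V, arr)` is acyclic: the transitive closure of `arr` is irreflexive. -/
def IsAcyclicQuiver {V : Type} (arr : V → V → Prop) : Prop :=
  ∀ v : V, ¬ Relation.TransGen arr v v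

/-- The multiplicative character of the free monoid over `V` sending the letter `q`
to `1` if `q ∈ M` and to `0` otherwise. -/
def charWord (k : Type) [CommRing k] {V : Type} [DecidableEq V] (M : Finset V) :
    FreeMonoid V →* k :=
  FreeMonoid.lift fun q => if q ∈ M then (1 : k) else 0

/-- The monoid homomorphism `HK(Q) →* k` sending `x_q` to `1` if `q ∈ M` and to `0`
otherwise; it is well defined since the assignment respects the defining relations. -/
def charHom (k : Type) [CommRing k] {V : Type} [DecidableEq V]
    (arr : V → V → Prop) (M : Finset V) : HK arr →* k :=
  Con.lift _ (charWord k M) (Con.conGen_le.mpr (fun a b h => by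
    cases h with
    | idem t =>
        refine (Con.ker_rel _).mpr ?_
        by_cases ht : t ∈ M <;> simp [charWord, ht]
    | braid s t =>
        refine (Con.ker_rel _).mpr ?_
        by_cases hs : s ∈ M <;> by_cases ht : t ∈ M <;> simp [charWord, hs, ht]
    | absorb s t hst =>
        refine (Con.ker_rel _).mpr ?_
        by_cases hs : s ∈ M <;> by_cases ht : t ∈ M <;> simp [charWord, hs, ht]))

/-- The `k`-algebra homomorphism `δ_M : MonoidAlgebra k (HK Q) →ₐ[k] k` induced by
the character `charHom k arr M`. -/
noncomputable def deltaHom (k : Type) [Field k] {V : Type} [DecidableEq V]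
    (arr : V → V → Prop) (M : Finset V) : MonoidAlgebra k (HK arr) →ₐ[k] k :=
  MonoidAlgebra.lift k k (HK arr) (charHom k arr M)

/-- The one-dimensional `MonoidAlgebra k (HK Q)`-module `E_M`: the field `k` with
action through `δ_M`. -/
def Emod (k : Type) {V : Type} (arr : V → V → Prop) (M : Finset V) : Type := k

instance (k : Type) [Field k] {V : Type} (arr : V → V → Prop) (M : Finset V) :
    AddCommGroup (Emod k arr M) := inferInstanceAs (AddCommGroup k)

instance (k : Type) [Field k] {V : Type} (arr : V → V → Prop) (M : Finset V) :
    Module k (Emod k arr M) := inferInstanceAs (Module k k)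

noncomputable instance (k : Type) [Field k] {V : Type} [DecidableEq V]
    (arr : V → V → Prop) (M : Finset V) :
    Module (MonoidAlgebra k (HK arr)) (Emod k arr M) :=
  Module.compHom k (deltaHom k arr M).toRingHom

/-! Each generator `x_t` is idempotent, so on a simple module `S` it acts as `0` or `1` as soon
as its image `x_t S` is a submodule. This is shown by well-founded induction from the sinks of the
acyclic quiver: once every `x_s` with an arrow `t → s` acts as a scalar, the remaining generators
satisfy `x_t x_s x_t = x_s x_t`, so all of them preserve `x_t S`. Then the whole algebra acts on
`S` through the character `δ_M`, where `M` is the set of vertices whose generator acts as `1`, so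
`S ≅ E_M`. Finally `δ_M` can be read off from `E_M` and determines `M`. -/

open MonoidAlgebra

theorem IsAcyclicQuiver.wellFounded_swap {V : Type} [Finite V] {arr : V → V → Prop}
    (hQ : IsAcyclicQuiver arr) : WellFounded (Function.swap arr) := by
  have : Std.Irrefl (Relation.TransGen (Function.swap arr)) :=
    ⟨fun v h => hQ v (Relation.transGen_swap.mp h)⟩
  exact (Finite.wellFounded_of_trans_of_irrefl _).mono fun _ _ => Relation.TransGen.single

section ActsByZeroOrOne

variable {R S : Type*} [Ring R] [AddCommGroup S] [Module R S]

variable (S) in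
def ActsByZeroOrOne (e : R) : Prop :=
  (∀ u : S, e • u = 0) ∨ ∀ u : S, e • u = u

theorem IsIdempotentElem.actsByZeroOrOne [IsSimpleModule R S] {e : R} (he : IsIdempotentElem e)
    (hstab : ∀ (r : R) (u : S), ∃ w, r • e • u = e • w) : ActsByZeroOrOne S e := by
  let W : Submodule R S :=
    { carrier := Set.range (e • ·)
      zero_mem' := ⟨0, smul_zero e⟩
      add_mem' := by
        rintro _ _ ⟨u, rfl⟩ ⟨w, rfl⟩
        exact ⟨u + w, smul_add e u w⟩
      smul_mem' := by
        rintro r _ ⟨u, rfl⟩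
        obtain ⟨w, hw⟩ := hstab r u
        exact ⟨w, hw.symm⟩ }
  rcases eq_bot_or_eq_top W with hW | hW
  · refine .inl fun u => ?_
    exact (Submodule.mem_bot R).mp (hW ▸ ⟨u, rfl⟩ : e • u ∈ (⊥ : Submodule R S))
  · refine .inr fun u => ?_
    obtain ⟨w, rfl⟩ : u ∈ W := hW ▸ Submodule.mem_top
    rw [← mul_smul, he.eq]

end ActsByZeroOrOne

namespace HK

variable {V : Type} {arr : V → V → Prop}

theorem x_mul_x (t : V) : x arr t * x arr t = x arr t :=
  (Con.eq _).mpr (.of _ _ (HKRel.idem t))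

theorem x_mul_x_mul_x_of_not_arr {s t : V} (h : ¬ arr t s) :
    x arr t * x arr s * x arr t = x arr s * x arr t :=
  (Con.eq _).mpr (.of _ _ (HKRel.absorb s t h))

theorem closure_range_x : Submonoid.closure (Set.range (x arr)) = ⊤ := by
  rw [show x arr = (HKCon arr).mk' ∘ FreeMonoid.of from rfl, Set.range_comp,
    ← MonoidHom.map_mclosure, FreeMonoid.closure_range_of, ← MonoidHom.mrange_eq_map]
  exact MonoidHom.mrange_eq_top_of_surjective _ (HKCon arr).mk'_surjective

end HK

section Character

variable {k : Type} [Field k] {V : Type} [DecidableEq V] {arr : V → V → Prop}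

theorem charHom_x (M : Finset V) (t : V) :
    charHom k arr M (HK.x arr t) = if t ∈ M then 1 else 0 :=
  rfl

theorem deltaHom_of (M : Finset V) (m : HK arr) :
    deltaHom k arr M (of k (HK arr) m) = charHom k arr M m :=
  lift_of _ m

theorem Emod.smul_def {M : Finset V} (b : MonoidAlgebra k (HK arr)) (c : Emod k arr M) :
    b • c = deltaHom k arr M b • c :=
  rfl

theorem deltaHom_injective : Function.Injective (deltaHom k arr) := by
  intro M N h
  ext t
  have ht := congr($h (of k (HK arr) (HK.x arr t)))
  simp only [deltaHom_of, charHom_x] at ht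
  split_ifs at ht <;> simp_all

theorem deltaHom_eq_of_linearEquiv {M N : Finset V}
    (φ : Emod k arr M ≃ₗ[MonoidAlgebra k (HK arr)] Emod k arr N) :
    deltaHom k arr M = deltaHom k arr N := by
  have hφ (c : k) (x : Emod k arr M) : φ (c • x) = c • φ x := by
    have h := φ.map_smul (algebraMap k _ c) x
    rwa [Emod.smul_def, Emod.smul_def, AlgHom.commutes, AlgHom.commutes,
      Algebra.algebraMap_self_apply] at h
  let one : Emod k arr M := (1 : k)
  have hone : φ one ≠ 0 := (map_ne_zero_iff φ φ.injective).mpr (one_ne_zero (α := k))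
  refine AlgHom.ext fun b => ?_
  apply smul_left_injective k hone
  calc deltaHom k arr M b • φ one = φ (b • one) := by rw [← hφ, Emod.smul_def]
    _ = deltaHom k arr N b • φ one := by rw [φ.map_smul, Emod.smul_def]

end Character

section SimpleModule

variable {k : Type} [Field k] {V : Type} {arr : V → V → Prop} {S : Type*} [AddCommGroup S]
  [Module k S] [Module (MonoidAlgebra k (HK arr)) S] [IsScalarTower k (MonoidAlgebra k (HK arr)) S]

theorem HK.exists_smul_x_smul_eq_x_smul {t : V}
    (h : ∀ s, arr t s → ActsByZeroOrOne S (of k (HK arr) (HK.x arr s)))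
    (b : MonoidAlgebra k (HK arr)) (u : S) :
    ∃ w, b • of k (HK arr) (HK.x arr t) • u = of k (HK arr) (HK.x arr t) • w := by
  set e := of k (HK arr) (HK.x arr t)
  let W : Submodule k S := LinearMap.range (Algebra.lsmul k k S e)
  have hx : ∀ s, ∀ v ∈ W, of k (HK arr) (HK.x arr s) • v ∈ W := by
    rintro s _ ⟨u, rfl⟩
    by_cases hts : arr t s
    · rcases h s hts with h0 | h1
      · exact h0 _ ▸ W.zero_mem
      · exact h1 _ ▸ ⟨u, rfl⟩
    · refine ⟨of k (HK arr) (HK.x arr s) • e • u, ?_⟩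
      simp only [Algebra.lsmul_apply, e, ← mul_smul, ← map_mul, ← mul_assoc,
        HK.x_mul_x_mul_x_of_not_arr hts]
  have hW : ∀ (m : HK arr), ∀ v ∈ W, of k (HK arr) m • v ∈ W := by
    intro m
    induction m using Submonoid.induction_of_closure_eq_top_left HK.closure_range_x with
    | one => exact fun v hv => by rwa [map_one, one_smul]
    | mul_left _ hs m hm =>
      obtain ⟨s, rfl⟩ := hs
      intro v hv
      rw [map_mul, mul_smul]
      exact hx s _ (hm v hv)
  obtain ⟨w, hw⟩ := (submoduleOfSMulMem W hW).smul_mem b ⟨u, rfl⟩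
  exact ⟨w, hw.symm⟩

theorem HK.actsByZeroOrOne_x [Finite V] (hQ : IsAcyclicQuiver arr)
    [IsSimpleModule (MonoidAlgebra k (HK arr)) S] (t : V) :
    ActsByZeroOrOne S (of k (HK arr) (HK.x arr t)) := by
  induction t using hQ.wellFounded_swap.induction with
  | _ t ih =>
    refine IsIdempotentElem.actsByZeroOrOne ?_ (exists_smul_x_smul_eq_x_smul ih)
    rw [IsIdempotentElem, ← map_mul, x_mul_x]

end SimpleModule

section Classification

variable {k : Type} [Field k] {V : Type} [DecidableEq V] {arr : V → V → Prop} {S : Type*}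
  [AddCommGroup S] [Module k S] [Module (MonoidAlgebra k (HK arr)) S]

theorem smul_eq_deltaHom_smul [IsScalarTower k (MonoidAlgebra k (HK arr)) S] {M : Finset V}
    (h : ∀ t (u : S), of k (HK arr) (HK.x arr t) • u = charHom k arr M (HK.x arr t) • u)
    (b : MonoidAlgebra k (HK arr)) (u : S) : b • u = deltaHom k arr M b • u := by
  have h_lsmul :
      Algebra.lsmul k k S = (Algebra.ofId k (Module.End k S)).comp (deltaHom k arr M) := by
    apply (MonoidAlgebra.lift k _ (HK arr)).symm.injective
    refine MonoidHom.eq_of_eqOn_denseM HK.closure_range_x ?_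
    rintro _ ⟨t, rfl⟩
    ext u
    rw [MonoidAlgebra.lift_symm_apply, MonoidAlgebra.lift_symm_apply]
    exact (h t u).trans (by rw [← deltaHom_of]; rfl)
  exact LinearMap.congr_fun (AlgHom.congr_fun h_lsmul b) u

theorem exists_forall_x_smul_eq_charHom_smul [Fintype V]
    (h : ∀ t, ActsByZeroOrOne S (of k (HK arr) (HK.x arr t))) :
    ∃ M : Finset V, ∀ t (u : S),
      of k (HK arr) (HK.x arr t) • u = charHom k arr M (HK.x arr t) • u := by
  classical
  refine ⟨({t | ∀ u : S, of k (HK arr) (HK.x arr t) • u = u} : Finset V), fun t u => ?_⟩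
  rw [charHom_x]
  split_ifs with ht
  · rw [one_smul, (Finset.mem_filter.mp ht).2]
  · rw [zero_smul]
    exact (h t).resolve_right (by simpa using ht) u

theorem Emod.nonempty_linearEquiv [IsSimpleModule (MonoidAlgebra k (HK arr)) S] {M : Finset V}
    (h : ∀ b (u : S), b • u = deltaHom k arr M b • u) :
    Nonempty (S ≃ₗ[MonoidAlgebra k (HK arr)] Emod k arr M) := by
  have := IsSimpleModule.nontrivial (MonoidAlgebra k (HK arr)) S
  obtain ⟨v, hv⟩ := exists_ne (0 : S)
  let φ : Emod k arr M →ₗ[MonoidAlgebra k (HK arr)] S :=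
    { toFun := fun (c : k) => c • v
      map_add' := fun (c d : k) => add_smul c d v
      map_smul' := fun b (c : k) => by
        change (deltaHom k arr M b * c) • v = b • c • v
        rw [h, mul_smul] }
  have hinj : Function.Injective φ := smul_left_injective k hv
  have hsurj : Function.Surjective φ :=
    (LinearMap.surjective_or_eq_zero φ).resolve_right fun h0 => hv (by
      rw [← one_smul k v]
      exact LinearMap.congr_fun h0 (1 : k))
  exact ⟨(LinearEquiv.ofBijective φ ⟨hinj, hsurj⟩).symm⟩

end Classification

/-- For a field `k` and a finite acyclic quiver `Q`, the
one-dimensional modules `E_M`, for `M` ranging over the subsets of the vertex set,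
form a complete and irredundant list of the simple modules of
`B = MonoidAlgebra k (HK Q)`: they are pairwise non-isomorphic, every simple
`B`-module is isomorphic to some `E_M`, and each `E_M` is one-dimensional over `k`
(so `B` is basic with exactly `2^{|V|}` isomorphism classes of simple modules). -/
theorem hk_simple_modules (k V : Type) [Field k] [Fintype V] [DecidableEq V]
    (arr : V → V → Prop) (hQ : IsAcyclicQuiver arr) :
    (∀ M N : Finset V, M ≠ N →
       IsEmpty (Emod k arr M ≃ₗ[MonoidAlgebra k (HK arr)] Emod k arr N)) ∧
    (∀ (S : Type) [AddCommGroup S] [Module (MonoidAlgebra k (HK arr)) S],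
       IsSimpleModule (MonoidAlgebra k (HK arr)) S →
       ∃ M : Finset V, Nonempty (S ≃ₗ[MonoidAlgebra k (HK arr)] Emod k arr M)) ∧
    (∀ M : Finset V, Module.finrank k (Emod k arr M) = 1) := by
  refine ⟨fun M N hMN => ⟨fun φ => hMN (deltaHom_injective (deltaHom_eq_of_linearEquiv φ))⟩,
    fun S _ _ _ => ?_, fun M => Module.finrank_self k⟩
  let : Module k S := Module.compHom S (algebraMap k (MonoidAlgebra k (HK arr)))
  have : IsScalarTower k (MonoidAlgebra k (HK arr)) S := .of_algebraMap_smul fun _ _ => rfl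
  have hx (t : V) := HK.actsByZeroOrOne_x (k := k) (S := S) hQ t
  obtain ⟨M, hM⟩ := exists_forall_x_smul_eq_charHom_smul hx
  exact ⟨M, Emod.nonempty_linearEquiv (smul_eq_deltaHom_smul hM)⟩
end

section
/- For the linearly oriented type-A quiver Q_n (n ≥ 1), the graph Γ(Q_n) on the subsets of {1,…,n} has exactly n+1 connected components; more precisely, two subsets lie in the same connected component of Γ(Q_n) if and only if they have the same cardinality. -/
set_option linter.unusedVariables false

/-- The arrow relation of the linearly oriented type-`A` quiver `Q_n` with vertices
`1, …, n` (modelled as `Fin n`) and arrows `i → i+1`. -/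
def arrQn (n : ℕ) : Fin n → Fin n → Prop := fun i j => (i : ℕ) + 1 = (j : ℕ)

/-- `P ⇉ R`: the subset `P` is strongly connected towards the subset `R`:
both are nonempty and there is an arrow `p → r` for every `p ∈ P` and `r ∈ R`. -/
def StronglyConnectedTowards {V : Type} (arr : V → V → Prop) (P R : Finset V) : Prop :=
  P.Nonempty ∧ R.Nonempty ∧ ∀ p ∈ P, ∀ r ∈ R, arr p r

/-- The graph `Γ(Q)` on the finite subsets of the vertex set of `Q`: two subsets
`M ≠ N` are adjacent iff `(M \ N) ⇉ (N \ M)` or `(N \ M) ⇉ (M \ N)`. -/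
def GammaGraph {V : Type} [DecidableEq V] (arr : V → V → Prop) :
    SimpleGraph (Finset V) where
  Adj M N := M ≠ N ∧
    (StronglyConnectedTowards arr (M \ N) (N \ M) ∨
     StronglyConnectedTowards arr (N \ M) (M \ N))
  symm := ⟨fun M N h => ⟨h.1.symm, h.2.symm⟩⟩
  loopless := ⟨fun M h => h.1 rfl⟩

/-! In `Q_n` every vertex has at most one incoming and at most one outgoing arrow, so `P ⇉ R`
forces `P` and `R` to be singletons: every edge of `Γ(Q_n)` exchanges one element for a
neighbouring one, and the cardinality is constant on components. Conversely, exchanging `i ∈ M`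
for `i - 1 ∉ M` is an edge and lowers the weight `∑ i ∈ M, i`, so a set of minimal weight in
the component of `M` is an initial segment; initial segments are determined by their
cardinality. -/

open Finset

namespace StronglyConnectedTowards

variable {V : Type} {arr : V → V → Prop} {P R : Finset V}

theorem eq_singleton_left (hL : Relator.LeftUnique arr)
    (h : StronglyConnectedTowards arr P R) : ∃ p, P = {p} := by
  obtain ⟨⟨p, hp⟩, ⟨r, hr⟩, harr⟩ := h
  exact ⟨p, eq_singleton_iff_unique_mem.2
    ⟨hp, fun x hx => hL (harr x hx r hr) (harr p hp r hr)⟩⟩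

theorem eq_singleton_right (hR : Relator.RightUnique arr)
    (h : StronglyConnectedTowards arr P R) : ∃ r, R = {r} := by
  obtain ⟨⟨p, hp⟩, ⟨r, hr⟩, harr⟩ := h
  exact ⟨r, eq_singleton_iff_unique_mem.2
    ⟨hr, fun x hx => hR (harr p hp x hx) (harr p hp r hr)⟩⟩

theorem card_eq (hL : Relator.LeftUnique arr) (hR : Relator.RightUnique arr)
    (h : StronglyConnectedTowards arr P R) : #P = #R := by
  obtain ⟨p, rfl⟩ := h.eq_singleton_left hL
  obtain ⟨r, rfl⟩ := h.eq_singleton_right hR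
  simp

end StronglyConnectedTowards

namespace GammaGraph

variable {V : Type} [DecidableEq V] {arr : V → V → Prop} {M N : Finset V}

theorem card_eq_of_adj (hL : Relator.LeftUnique arr) (hR : Relator.RightUnique arr)
    (h : (GammaGraph arr).Adj M N) : #M = #N := by
  rw [← card_sdiff_eq_card_sdiff_iff]
  rcases h.2 with h | h
  · exact h.card_eq hL hR
  · exact (h.card_eq hL hR).symm

theorem card_eq_of_reachable (hL : Relator.LeftUnique arr) (hR : Relator.RightUnique arr)
    (h : (GammaGraph arr).Reachable M N) : #M = #N := by
  obtain ⟨w⟩ := h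
  induction w with
  | nil => rfl
  | cons hadj _ ih => exact (card_eq_of_adj hL hR hadj).trans ih

theorem adj_insert_erase {a b : V} (ha : a ∉ M) (hb : b ∈ M) (hab : arr a b) :
    (GammaGraph arr).Adj M (insert a (M.erase b)) := by
  have hMN : M \ insert a (M.erase b) = {b} := by
    ext x; by_cases x = b <;> by_cases x = a <;> simp_all
  have hNM : insert a (M.erase b) \ M = {a} := by
    ext x; by_cases x = b <;> by_cases x = a <;> simp_all
  refine ⟨fun h => ha (h ▸ mem_insert_self a _), Or.inr ?_⟩
  rw [hMN, hNM]
  exact ⟨singleton_nonempty a, singleton_nonempty b, by simpa using hab⟩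

end GammaGraph

theorem Finset.eq_of_isLowerSet_of_card_eq {α : Type*} [LinearOrder α] {s t : Finset α}
    (hs : IsLowerSet (s : Set α)) (ht : IsLowerSet (t : Set α)) (h : #s = #t) : s = t := by
  rcases hs.total ht with hst | hts
  · exact eq_of_subset_of_card_le (coe_subset.1 hst) h.ge
  · exact (eq_of_subset_of_card_le (coe_subset.1 hts) h.le).symm

section Qn

variable {n : ℕ}

theorem arrQn_leftUnique : Relator.LeftUnique (arrQn n) :=
  fun _ _ _ h h' => Fin.ext (by unfold arrQn at h h'; omega)

theorem arrQn_rightUnique : Relator.RightUnique (arrQn n) :=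
  fun _ _ _ h h' => Fin.ext (by unfold arrQn at h h'; omega)

theorem exists_arrQn_of_not_isLowerSet {M : Finset (Fin n)}
    (h : ¬IsLowerSet (M : Set (Fin n))) :
    ∃ a ∉ M, ∃ b ∈ M, arrQn n a b := by
  contrapose! h
  suffices ∀ k, ∀ b ∈ M, ∀ a : Fin n, (a : ℕ) + k = b → a ∈ M from
    fun b a hab hb => this _ b hb a (Nat.add_sub_cancel' (Fin.le_iff_val_le_val.1 hab))
  intro k
  induction k with
  | zero => intro b hb a hab; rwa [Fin.ext hab]
  | succ k ih =>
    intro b hb a hab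
    have hc : (a : ℕ) + k < n := by omega
    refine ih ⟨_, hc⟩ ?_ a rfl
    by_contra hc'
    exact h _ hc' b hb (by simp only [arrQn]; omega)

theorem exists_reachable_isLowerSet (M : Finset (Fin n)) :
    ∃ L : Finset (Fin n), IsLowerSet (L : Set (Fin n)) ∧
      (GammaGraph (arrQn n)).Reachable M L := by
  obtain ⟨L, hML, hmin⟩ := Set.exists_min_image {L | (GammaGraph (arrQn n)).Reachable M L}
    (fun L => ∑ x ∈ L, (x : ℕ)) (Set.toFinite _) ⟨M, .refl M⟩
  refine ⟨L, ?_, hML⟩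
  by_contra hL
  obtain ⟨a, ha, b, hb, hab⟩ := exists_arrQn_of_not_isLowerSet hL
  have hweight : ∑ x ∈ insert a (L.erase b), (x : ℕ) + b = ∑ x ∈ L, (x : ℕ) + a := by
    rw [sum_insert (fun h => ha (mem_of_mem_erase h)), add_assoc, sum_erase_add _ _ hb, add_comm]
  have := hmin _ (hML.trans (GammaGraph.adj_insert_erase ha hb hab).reachable)
  unfold arrQn at hab
  omega

theorem gammaGraph_arrQn_reachable_iff (M N : Finset (Fin n)) :
    (GammaGraph (arrQn n)).Reachable M N ↔ #M = #N := by
  refine ⟨GammaGraph.card_eq_of_reachable arrQn_leftUnique arrQn_rightUnique, fun h => ?_⟩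
  obtain ⟨L, hL, hML⟩ := exists_reachable_isLowerSet M
  obtain ⟨L', hL', hNL'⟩ := exists_reachable_isLowerSet N
  have hcard : #L = #L' := by
    rw [← GammaGraph.card_eq_of_reachable arrQn_leftUnique arrQn_rightUnique hML, h,
      GammaGraph.card_eq_of_reachable arrQn_leftUnique arrQn_rightUnique hNL']
  rw [Finset.eq_of_isLowerSet_of_card_eq hL hL' hcard] at hML
  exact hML.trans hNL'.symm

end Qn

theorem gamma_Qn_components_general (n : ℕ) :
    (∀ M N : Finset (Fin n),
      (GammaGraph (arrQn n)).Reachable M N ↔ M.card = N.card) ∧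
    Nat.card (GammaGraph (arrQn n)).ConnectedComponent = n + 1 := by
  refine ⟨gammaGraph_arrQn_reachable_iff, ?_⟩
  let size : (GammaGraph (arrQn n)).ConnectedComponent → Fin (n + 1) :=
    SimpleGraph.ConnectedComponent.lift
      (fun M => ⟨#M, by simpa [Nat.lt_succ_iff] using card_le_univ M⟩)
      fun M N p _ => Fin.ext ((gammaGraph_arrQn_reachable_iff M N).1 p.reachable)
  have hinj : size.Injective := by
    rintro ⟨M⟩ ⟨N⟩ h
    exact SimpleGraph.ConnectedComponent.sound
      ((gammaGraph_arrQn_reachable_iff M N).2 (Fin.val_eq_of_eq h))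
  have hsurj : size.Surjective := fun k => by
    obtain ⟨M, -, hM⟩ := exists_subset_card_eq (s := (univ : Finset (Fin n)))
      (by simpa using Nat.lt_succ_iff.1 k.isLt)
    exact ⟨SimpleGraph.connectedComponentMk _ M, Fin.ext hM⟩
  rw [Nat.card_congr (Equiv.ofBijective size ⟨hinj, hsurj⟩), Nat.card_fin]

/-- For the linearly oriented type-`A` quiver `Q_n` (`n ≥ 1`), two
subsets of `{1,…,n}` lie in the same connected component of `Γ(Q_n)` iff they have the
same cardinality; in particular `Γ(Q_n)` has exactly `n + 1` connected components. -/
theorem gamma_Qn_components (n : ℕ) (hn : 1 ≤ n) :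
    (∀ M N : Finset (Fin n),
      (GammaGraph (arrQn n)).Reachable M N ↔ M.card = N.card) ∧
    Nat.card (GammaGraph (arrQn n)).ConnectedComponent = n + 1 :=
  gamma_Qn_components_general n
end

section
/- Let Q be a finite acyclic quiver with at least one vertex whose underlying undirected graph is connected (i.e. the symmetric closure of arr generates a connected graph on V), and suppose Q is not isomorphic to the linearly oriented type-A quiver on |V| vertices (there is no bijection σ : V → {1,…,|V|} with arr s t ↔ σ(t) = σ(s)+1). Then the graph Γ(Q) on the subsets of V has exactly 3 connected components, namely {∅}, {V}, and the set of all subsets M with ∅ ≠ M ≠ V. -/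
set_option linter.unusedVariables false

/-!
Two subsets of the same size are joined in `Γ(Q)` by moving one element at a time along the
underlying graph of `Q`: replacing `x` by a neighbour `y` is the edge `{x} ∪ S — {y} ∪ S`.
If no vertex had two out-neighbours or two in-neighbours, the transitive closure of `arr` would
be a total order whose covering relation is `arr`, i.e. `Q` would be linearly oriented of type `A`.
So some `v` has distinct out-neighbours (or in-neighbours) `a, b`, and the edge
`{v} ∪ S — {a, b} ∪ S` changes the size by one; hence all proper nonempty subsets lie in one
component. `∅` and `V` are isolated, since one of the two differences with them is empty.
-/

open Finset Relation

section Quiver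

variable {V : Type} {arr : V → V → Prop}

theorem stronglyConnectedTowards_singleton {x y : V} :
    StronglyConnectedTowards arr {x} {y} ↔ arr x y := by
  simp [StronglyConnectedTowards]

theorem transGen_trichotomous_of_leftUnique_of_rightUnique (hl : Relator.LeftUnique arr)
    (hr : Relator.RightUnique arr)
    (hconn : ∀ a b : V, ReflTransGen (fun x y => arr x y ∨ arr y x) a b) (a b : V) :
    TransGen arr a b ∨ a = b ∨ TransGen arr b a := by
  induction hconn a b using ReflTransGen.head_induction_on with
  | refl => exact .inr (.inl rfl)
  | @head p c hstep _ ih =>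
    rcases hstep with hpc | hcp
    · rcases ih with hcb | rfl | hbc
      · exact .inl (.head hpc hcb)
      · exact .inl (.single hpc)
      · obtain ⟨w, hbw, hwc⟩ := TransGen.tail'_iff.mp hbc
        obtain rfl := hl hwc hpc
        exact .inr (reflTransGen_iff_eq_or_transGen.mp hbw)
    · rcases ih with hcb | rfl | hbc
      · obtain ⟨w, hcw, hwb⟩ := TransGen.head'_iff.mp hcb
        obtain rfl := hr hcw hcp
        rcases reflTransGen_iff_eq_or_transGen.mp hwb with rfl | hpb
        · exact .inr (.inl rfl)
        · exact .inl hpb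
      · exact .inr (.inr (.single hcp))
      · exact .inr (.inr (hbc.tail hcp))

theorem arr_iff_transGen_covBy (hQ : IsAcyclicQuiver arr) (hr : Relator.RightUnique arr)
    (s t : V) :
    arr s t ↔ TransGen arr s t ∧ ∀ c, TransGen arr s c → ¬ TransGen arr c t := by
  constructor
  · refine fun hst => ⟨.single hst, fun c hsc hct => ?_⟩
    obtain ⟨z, hsz, hzc⟩ := TransGen.head'_iff.mp hsc
    obtain rfl := hr hsz hst
    exact hQ z (TransGen.trans_right hzc hct)
  · rintro ⟨hst, hcov⟩
    obtain ⟨z, hsz, hzt⟩ := TransGen.head'_iff.mp hst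
    rcases reflTransGen_iff_eq_or_transGen.mp hzt with rfl | hzt
    · exact hsz
    · exact absurd hzt (hcov z (.single hsz))

theorem exists_equiv_fin_covBy_iff (α : Type*) [Fintype α] [LinearOrder α] :
    ∃ σ : α ≃ Fin (Fintype.card α), ∀ s t : α, s ⋖ t ↔ (σ t : ℕ) = σ s + 1 := by
  let σ := (Fintype.orderIsoFinOfCardEq α rfl).symm
  refine ⟨σ.toEquiv, fun s t => ?_⟩
  rw [← apply_covBy_apply_iff σ, Fin.covBy_iff, Nat.covBy_iff_add_one_eq, eq_comm]
  rfl

theorem exists_equiv_fin_of_leftUnique_of_rightUnique [Fintype V] (hQ : IsAcyclicQuiver arr)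
    (hconn : ∀ a b : V, ReflTransGen (fun x y => arr x y ∨ arr y x) a b)
    (hl : Relator.LeftUnique arr) (hr : Relator.RightUnique arr) :
    ∃ σ : V ≃ Fin (Fintype.card V), ∀ s t : V, arr s t ↔ (σ t : ℕ) = σ s + 1 := by
  classical
  have : IsStrictTotalOrder V (TransGen arr) :=
    { trans := fun _ _ _ => TransGen.trans
      irrefl := hQ
      trichotomous := fun a b hab hba =>
        ((transGen_trichotomous_of_leftUnique_of_rightUnique hl hr hconn a b).resolve_left
          hab).resolve_right hba }
  let := linearOrderOfSTO (TransGen arr)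
  obtain ⟨σ, hσ⟩ := exists_equiv_fin_covBy_iff V
  exact ⟨σ, fun s t => (arr_iff_transGen_covBy hQ hr s t).trans (hσ s t)⟩

end Quiver

theorem SimpleGraph.Reachable.eq_of_neighborSet_eq_empty {α : Type*} {G : SimpleGraph α}
    {u w : α} (hu : G.neighborSet u = ∅) (h : G.Reachable u w) : u = w := by
  by_contra huw
  simpa [hu] using h.nonempty_neighborSet_left huw

section Gamma

variable {V : Type} [DecidableEq V] {arr : V → V → Prop}

theorem gammaGraph_adj_of_stronglyConnectedTowards {M N : Finset V}
    (h : StronglyConnectedTowards arr (M \ N) (N \ M)) : (GammaGraph arr).Adj M N :=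
  ⟨fun hMN => by simpa [hMN] using h.1, .inl h⟩

theorem gammaGraph_adj_union {P R S : Finset V} (hPS : Disjoint P S) (hRS : Disjoint R S)
    (hPR : Disjoint P R)
    (h : StronglyConnectedTowards arr P R ∨ StronglyConnectedTowards arr R P) :
    (GammaGraph arr).Adj (P ∪ S) (R ∪ S) := by
  have hsdiff : ∀ {A B : Finset V}, Disjoint A S → Disjoint A B →
      (A ∪ S) \ (B ∪ S) = A := by
    intro A B hAS hAB
    rw [union_sdiff_distrib, (disjoint_union_right.mpr ⟨hAB, hAS⟩).sdiff_eq_left,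
      sdiff_eq_empty_iff_subset.mpr subset_union_right, union_empty]
  have hP : (P ∪ S) \ (R ∪ S) = P := hsdiff hPS hPR
  have hR : (R ∪ S) \ (P ∪ S) = R := hsdiff hRS hPR.symm
  rcases h with h | h
  · exact gammaGraph_adj_of_stronglyConnectedTowards (by rwa [hP, hR])
  · exact (gammaGraph_adj_of_stronglyConnectedTowards (by rwa [hP, hR])).symm

theorem gammaGraph_adj_insert {x y : V} {S : Finset V} (hxy : arr x y ∨ arr y x) (hne : x ≠ y)
    (hx : x ∉ S) (hy : y ∉ S) : (GammaGraph arr).Adj (insert x S) (insert y S) := by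
  rw [insert_eq, insert_eq]
  exact gammaGraph_adj_union (disjoint_singleton_left.mpr hx) (disjoint_singleton_left.mpr hy)
    (disjoint_singleton.mpr hne)
    (by rwa [stronglyConnectedTowards_singleton, stronglyConnectedTowards_singleton])

theorem gammaGraph_neighborSet_empty : (GammaGraph arr).neighborSet ∅ = ∅ := by
  ext N
  simp [GammaGraph, StronglyConnectedTowards]

theorem gammaGraph_neighborSet_univ [Fintype V] :
    (GammaGraph arr).neighborSet univ = ∅ := by
  ext N
  simp [GammaGraph, StronglyConnectedTowards]

theorem gammaGraph_reachable_empty_iff {N : Finset V} :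
    (GammaGraph arr).Reachable ∅ N ↔ N = ∅ :=
  ⟨fun h => (h.eq_of_neighborSet_eq_empty gammaGraph_neighborSet_empty).symm,
    fun h => h ▸ .rfl⟩

theorem gammaGraph_reachable_univ_iff [Fintype V] {N : Finset V} :
    (GammaGraph arr).Reachable univ N ↔ N = univ :=
  ⟨fun h => (h.eq_of_neighborSet_eq_empty gammaGraph_neighborSet_univ).symm,
    fun h => h ▸ .rfl⟩

end Gamma

section Reachability

variable {V : Type} [DecidableEq V] {arr : V → V → Prop}

theorem gammaGraph_reachable_insert
    (hconn : ∀ a b : V, ReflTransGen (fun x y => arr x y ∨ arr y x) a b)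
    {x y : V} {S : Finset V} (hx : x ∉ S) (hy : y ∉ S) :
    (GammaGraph arr).Reachable (insert x S) (insert y S) := by
  induction hconn x y generalizing S with
  | refl => rfl
  | @tail b c _ hbc ih =>
    by_cases hbc' : b = c
    · subst hbc'; exact ih hx hy
    by_cases hb : b ∈ S
    · by_cases hxc : x = c
      · subst hxc; rfl
      -- `b` is occupied: first move it on to `c`, then walk `x` into its place
      obtain ⟨S', hbS', rfl⟩ : ∃ S', b ∉ S' ∧ S = insert b S' :=
        ⟨S.erase b, notMem_erase b S, (insert_erase hb).symm⟩
      simp only [mem_insert, not_or] at hx hy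
      have hswap := gammaGraph_adj_insert hbc hbc' (S := insert x S')
        (by simp [hbS', Ne.symm hx.1]) (by simp [hy.2, Ne.symm hxc])
      have hwalk := ih (S := insert c S') (by simp [hxc, hx.2]) (by simp [hbc', hbS'])
      rw [insert_comm x b, insert_comm c b]
      rw [insert_comm c x] at hswap
      exact hswap.reachable.trans hwalk
    · exact (ih hx hb).trans (gammaGraph_adj_insert hbc hbc' hb hy).reachable

theorem gammaGraph_reachable_of_card_eq
    (hconn : ∀ a b : V, ReflTransGen (fun x y => arr x y ∨ arr y x) a b)
    {M N : Finset V} (h : #M = #N) : (GammaGraph arr).Reachable M N := by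
  induction hk : #(M \ N) generalizing M with
  | zero =>
    obtain rfl : M = N := eq_of_subset_of_card_le (sdiff_eq_empty_iff_subset.mp
      (card_eq_zero.mp hk)) h.ge
    rfl
  | succ k ih =>
    obtain ⟨x, hx⟩ : (M \ N).Nonempty := card_pos.mp (by omega)
    obtain ⟨y, hy⟩ : (N \ M).Nonempty := card_pos.mp (by rw [← card_sdiff_comm h]; omega)
    rw [mem_sdiff] at hx hy
    have hyM : y ∉ M.erase x := fun h => hy.2 (mem_of_mem_erase h)
    rw [← insert_erase hx.1]
    refine (gammaGraph_reachable_insert hconn (notMem_erase x M) hyM).trans (ih ?_ ?_)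
    · rw [card_insert_of_notMem hyM, card_erase_add_one hx.1, h]
    · rw [insert_sdiff_of_mem _ hy.1, erase_sdiff_comm, card_erase_of_mem (mem_sdiff.mpr hx), hk]
      rfl

variable [Fintype V]

theorem gammaGraph_reachable_of_card_eq_add
    (hconn : ∀ a b : V, ReflTransGen (fun x y => arr x y ∨ arr y x) a b)
    {P R M N : Finset V} (hPR : Disjoint P R)
    (h : StronglyConnectedTowards arr P R ∨ StronglyConnectedTowards arr R P) {k : ℕ}
    (hM : #M = #P + k) (hN : #N = #R + k) (hk : #P + #R + k ≤ Fintype.card V) :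
    (GammaGraph arr).Reachable M N := by
  obtain ⟨S, hS, hSk⟩ := exists_subset_card_eq (s := (P ∪ R)ᶜ) (n := k)
    (by rw [card_compl, card_union_of_disjoint hPR]; omega)
  have hPRS : Disjoint (P ∪ R) S := disjoint_of_subset_right hS disjoint_compl_right
  rw [disjoint_union_left] at hPRS
  have hMP : #M = #(P ∪ S) := by rw [card_union_of_disjoint hPRS.1]; omega
  have hRN : #(R ∪ S) = #N := by rw [card_union_of_disjoint hPRS.2]; omega
  exact (gammaGraph_reachable_of_card_eq hconn hMP).trans
    ((gammaGraph_adj_union hPRS.1 hPRS.2 hPR h).reachable.trans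
      (gammaGraph_reachable_of_card_eq hconn hRN))

end Reachability

theorem exists_branch_vertex {V : Type} [Fintype V] [DecidableEq V] {arr : V → V → Prop}
    (hQ : IsAcyclicQuiver arr)
    (hconn : ∀ a b : V, ReflTransGen (fun x y => arr x y ∨ arr y x) a b)
    (hnotlin : ¬ ∃ σ : V ≃ Fin (Fintype.card V),
      ∀ s t : V, arr s t ↔ ((σ t : ℕ) = (σ s : ℕ) + 1)) :
    ∃ v a b : V, a ≠ b ∧ v ≠ a ∧ v ≠ b ∧
      (StronglyConnectedTowards arr {v} {a, b} ∨ StronglyConnectedTowards arr {a, b} {v}) := by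
  have hnotunique : ¬ (Relator.LeftUnique arr ∧ Relator.RightUnique arr) :=
    fun ⟨hl, hr⟩ => hnotlin (exists_equiv_fin_of_leftUnique_of_rightUnique hQ hconn hl hr)
  have hne {s t : V} (h : arr s t) : s ≠ t := fun hst => hQ s (.single (hst ▸ h))
  simp only [Relator.LeftUnique, Relator.RightUnique, not_and_or, not_forall] at hnotunique
  rcases hnotunique with ⟨a, b, v, hav, hbv, hab⟩ | ⟨v, a, b, hva, hvb, hab⟩
  · exact ⟨v, a, b, hab, (hne hav).symm, (hne hbv).symm,
      .inr ⟨by simp, by simp, by simp [hav, hbv]⟩⟩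
  · exact ⟨v, a, b, hab, hne hva, hne hvb, .inl ⟨by simp, by simp, by simp [hva, hvb]⟩⟩

section Components

variable {V : Type} [Fintype V] [DecidableEq V] {arr : V → V → Prop}

theorem gammaGraph_reachable_of_ne_empty_of_ne_univ
    (hconn : ∀ a b : V, ReflTransGen (fun x y => arr x y ∨ arr y x) a b)
    {v a b : V} (hab : a ≠ b) (hva : v ≠ a) (hvb : v ≠ b)
    (hbranch : StronglyConnectedTowards arr {v} {a, b} ∨ StronglyConnectedTowards arr {a, b} {v})
    {M N : Finset V} (hM₀ : M ≠ ∅) (hM : M ≠ univ) (hN₀ : N ≠ ∅) (hN : N ≠ univ) :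
    (GammaGraph arr).Reachable M N := by
  have hdisj : Disjoint ({a, b} : Finset V) {v} := by simp [hva, hvb]
  have hdescend : ∀ m, ∀ M : Finset V, #M = m + 1 → m + 1 < Fintype.card V →
      (GammaGraph arr).Reachable M {v} := by
    intro m
    induction m with
    | zero => exact fun M hM _ => gammaGraph_reachable_of_card_eq hconn (by simpa using hM)
    | succ m ih =>
      intro M hM hlt
      obtain ⟨L, -, hL⟩ := exists_subset_card_eq (s := (univ : Finset V)) (n := m + 1)
        (by simp; omega)
      refine (gammaGraph_reachable_of_card_eq_add hconn hdisj hbranch.symm (k := m) ?_ ?_ ?_).trans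
        (ih L hL (by omega))
      all_goals simp [card_pair hab]; omega
  have hproper : ∀ M : Finset V, M ≠ ∅ → M ≠ univ → (GammaGraph arr).Reachable M {v} :=
    fun M hM₀ hM => by
      have hpos := card_pos.mpr (nonempty_iff_ne_empty.mpr hM₀)
      have hlt := (card_lt_iff_ne_univ M).mpr hM
      exact hdescend (#M - 1) M (by omega) (by omega)
  exact (hproper M hM₀ hM).trans (hproper N hN₀ hN).symm

theorem gammaGraph_reachable_iff
    (hproper : ∀ M N : Finset V, M ≠ ∅ → M ≠ univ → N ≠ ∅ → N ≠ univ →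
      (GammaGraph arr).Reachable M N)
    (M N : Finset V) :
    (GammaGraph arr).Reachable M N ↔
      ((M = ∅ ∧ N = ∅) ∨ (M = univ ∧ N = univ) ∨
        (M ≠ ∅ ∧ M ≠ univ ∧ N ≠ ∅ ∧ N ≠ univ)) := by
  constructor
  · intro h
    by_cases hM₀ : M = ∅
    · subst hM₀; exact .inl ⟨rfl, gammaGraph_reachable_empty_iff.mp h⟩
    by_cases hM : M = univ
    · subst hM; exact .inr (.inl ⟨rfl, gammaGraph_reachable_univ_iff.mp h⟩)
    refine .inr (.inr ⟨hM₀, hM, ?_, ?_⟩) <;> rintro rfl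
    · exact hM₀ (gammaGraph_reachable_empty_iff.mp h.symm)
    · exact hM (gammaGraph_reachable_univ_iff.mp h.symm)
  · rintro (⟨rfl, rfl⟩ | ⟨rfl, rfl⟩ | ⟨hM₀, hM, hN₀, hN⟩)
    · rfl
    · rfl
    · exact hproper M N hM₀ hM hN₀ hN

theorem nat_card_gammaGraph_connectedComponent
    (hproper : ∀ M N : Finset V, M ≠ ∅ → M ≠ univ → N ≠ ∅ → N ≠ univ →
      (GammaGraph arr).Reachable M N)
    {L : Finset V} (hL₀ : L ≠ ∅) (hL : L ≠ univ) :
    Nat.card (GammaGraph arr).ConnectedComponent = 3 := by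
  have huniv : (univ : Finset V) ≠ ∅ := fun h => hL₀ (subset_empty.mp (h ▸ subset_univ L))
  let C := (GammaGraph arr).connectedComponentMk
  rw [← Set.ncard_univ, Set.ncard_eq_three]
  refine ⟨C ∅, C univ, C L, ?_, ?_, ?_, ?_⟩
  · rw [Ne, SimpleGraph.ConnectedComponent.eq, gammaGraph_reachable_empty_iff]; exact huniv
  · rw [Ne, SimpleGraph.ConnectedComponent.eq, gammaGraph_reachable_empty_iff]; exact hL₀
  · rw [Ne, SimpleGraph.ConnectedComponent.eq, gammaGraph_reachable_univ_iff]; exact hL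
  · ext c
    induction c using SimpleGraph.ConnectedComponent.ind with | h M => ?_
    simp only [Set.mem_univ, Set.mem_insert_iff, Set.mem_singleton_iff, C,
      SimpleGraph.ConnectedComponent.eq, true_iff]
    by_cases hM₀ : M = ∅
    · exact .inl (hM₀ ▸ .rfl)
    by_cases hM : M = univ
    · exact .inr (.inl (hM ▸ .rfl))
    exact .inr (.inr (hproper M L hM₀ hM hL₀ hL))

end Components

theorem gamma_three_components_general (V : Type) [Fintype V] [DecidableEq V]
    (arr : V → V → Prop) (hQ : IsAcyclicQuiver arr)
    (hconn : ∀ a b : V, Relation.ReflTransGen (fun x y => arr x y ∨ arr y x) a b)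
    (hnotlin : ¬ ∃ σ : V ≃ Fin (Fintype.card V),
      ∀ s t : V, arr s t ↔ ((σ t : ℕ) = (σ s : ℕ) + 1)) :
    (∀ M N : Finset V, (GammaGraph arr).Reachable M N ↔
      ((M = ∅ ∧ N = ∅) ∨ (M = Finset.univ ∧ N = Finset.univ) ∨
       (M ≠ ∅ ∧ M ≠ Finset.univ ∧ N ≠ ∅ ∧ N ≠ Finset.univ))) ∧
    Nat.card (GammaGraph arr).ConnectedComponent = 3 := by
  obtain ⟨v, a, b, hab, hva, hvb, hbranch⟩ := exists_branch_vertex hQ hconn hnotlin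
  have hproper (M N : Finset V) :=
    gammaGraph_reachable_of_ne_empty_of_ne_univ hconn hab hva hvb hbranch (M := M) (N := N)
  have hv : ({v} : Finset V) ≠ univ := fun h => hva (mem_singleton.mp (h ▸ mem_univ a)).symm
  exact ⟨gammaGraph_reachable_iff hproper,
    nat_card_gammaGraph_connectedComponent hproper (singleton_ne_empty v) hv⟩

/-- Let `Q` be a finite acyclic quiver with at least one vertex whose
underlying undirected graph is connected, and which is not isomorphic to the linearly
oriented type-`A` quiver on `|V|` vertices.  Then `Γ(Q)` has exactly `3` connected
components, namely `{∅}`, `{V}` and the set of subsets `M` with `∅ ≠ M ≠ V`. -/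
theorem gamma_three_components (V : Type) [Fintype V] [DecidableEq V] [Nonempty V]
    (arr : V → V → Prop) (hQ : IsAcyclicQuiver arr)
    (hconn : ∀ a b : V, Relation.ReflTransGen (fun x y => arr x y ∨ arr y x) a b)
    (hnotlin : ¬ ∃ σ : V ≃ Fin (Fintype.card V),
      ∀ s t : V, arr s t ↔ ((σ t : ℕ) = (σ s : ℕ) + 1)) :
    (∀ M N : Finset V, (GammaGraph arr).Reachable M N ↔
      ((M = ∅ ∧ N = ∅) ∨ (M = Finset.univ ∧ N = Finset.univ) ∨
       (M ≠ ∅ ∧ M ≠ Finset.univ ∧ N ≠ ∅ ∧ N ≠ Finset.univ))) ∧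
    Nat.card (GammaGraph arr).ConnectedComponent = 3 :=
  gamma_three_components_general V arr hQ hconn hnotlin
end

section
/- Let Q be a finite acyclic quiver with at least two vertices whose underlying undirected graph is connected. For every proper nonempty subset A of V, every a ∈ A and every b ∈ V \ A, the subsets A and (A \ {a}) ∪ {b} lie in the same connected component of the graph Γ(Q). -/
set_option linter.unusedVariables false

/-
Exchanging `a` for `b` is done along an undirected path `a = x₀ — x₁ — ⋯ — xₙ = b` in `Q`.
Whenever `x ∈ A`, `y ∉ A` and `x — y` is an edge, `A` and `(A \ {x}) ∪ {y}` differ by the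
singletons `{x}` and `{y}`, so they are adjacent in `Γ(Q)`. By induction on the path: if the
next vertex `c` is outside `A`, first swap `x` for `c` and then exchange `c` for `b` along
the rest of the path; if `c ∈ A`, first exchange `c` for `b` along the rest of the path and then
swap `x` for the vacated `c`.
-/

namespace GammaGraph

variable {V : Type} [DecidableEq V] {arr : V → V → Prop}

theorem adj_of_sdiff_eq_singleton {M N : Finset V} {x y : V}
    (hMN : M \ N = {x}) (hNM : N \ M = {y}) (h : arr x y ∨ arr y x) :
    (GammaGraph arr).Adj M N := by
  refine ⟨by rintro rfl; simp at hMN, ?_⟩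
  simpa [hMN, hNM, StronglyConnectedTowards] using h

theorem adj_insert_erase_s16 {M : Finset V} {x y : V} (hx : x ∈ M) (hy : y ∉ M)
    (h : arr x y ∨ arr y x) :
    (GammaGraph arr).Adj M (insert y (M.erase x)) := by
  refine adj_of_sdiff_eq_singleton ?_ ?_ h <;> ext z <;>
    simp only [Finset.mem_sdiff, Finset.mem_insert, Finset.mem_erase, Finset.mem_singleton] <;>
    grind

theorem reachable_insert_erase_of_reflTransGen {a b : V}
    (hab : Relation.ReflTransGen (fun x y => arr x y ∨ arr y x) a b) :
    ∀ A : Finset V, a ∈ A → b ∉ A → (GammaGraph arr).Reachable A (insert b (A.erase a)) := by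
  induction hab using Relation.ReflTransGen.head_induction_on with
  | refl => exact fun A ha hb => absurd ha hb
  | @head x c hxc _ ih =>
    intro A hx hb
    by_cases hcA : c ∈ A
    · obtain rfl | hne := eq_or_ne x c
      · exact ih A hcA hb
      have hcb : c ≠ b := ne_of_mem_of_not_mem hcA hb
      have hstep := adj_insert_erase_s16 (M := insert b (A.erase c)) (x := x) (y := c)
        (by simp [hne, hx]) (by simp [hcb]) hxc
      have hswap : insert c ((insert b (A.erase c)).erase x) = insert b (A.erase x) := by
        ext z
        simp only [Finset.mem_insert, Finset.mem_erase]
        grind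
      rw [hswap] at hstep
      exact (ih A hcA hb).trans hstep.reachable
    · have hstep := (adj_insert_erase_s16 hx hcA hxc).reachable
      obtain rfl | hcb := eq_or_ne c b
      · exact hstep
      have hrest := ih (insert c (A.erase x)) (Finset.mem_insert_self c _)
        (by simp [hcb.symm, hb])
      rw [Finset.erase_insert (by simp [hcA])] at hrest
      exact hstep.trans hrest

end GammaGraph

theorem gamma_exchange_reachable_general (V : Type) [DecidableEq V]
    (arr : V → V → Prop)
    (hconn : ∀ a b : V, Relation.ReflTransGen (fun x y => arr x y ∨ arr y x) a b)
    (A : Finset V)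
    (a : V) (ha : a ∈ A) (b : V) (hb : b ∉ A) :
    (GammaGraph arr).Reachable A (insert b (A.erase a)) :=
  GammaGraph.reachable_insert_erase_of_reflTransGen (hconn a b) A ha hb

/-- Let `Q` be a finite acyclic quiver with at least two vertices
whose underlying undirected graph is connected.  For every proper nonempty subset `A`
of the vertex set, every `a ∈ A` and every `b ∉ A`, the subsets `A` and
`(A \ {a}) ∪ {b}` lie in the same connected component of `Γ(Q)`. -/
theorem gamma_exchange_reachable (V : Type) [Fintype V] [DecidableEq V]
    (arr : V → V → Prop) (hQ : IsAcyclicQuiver arr)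
    (hcard : 2 ≤ Fintype.card V)
    (hconn : ∀ a b : V, Relation.ReflTransGen (fun x y => arr x y ∨ arr y x) a b)
    (A : Finset V) (hA₁ : A ≠ ∅) (hA₂ : A ≠ Finset.univ)
    (a : V) (ha : a ∈ A) (b : V) (hb : b ∉ A) :
    (GammaGraph arr).Reachable A (insert b (A.erase a)) :=
  gamma_exchange_reachable_general V arr hconn A a ha b hb
end

section
/- Let n ≥ 1 and let K ⪰ J in P_n. For every saturated chain K = H_t ⋗ H_{t−1} ⋗ … ⋗ H_1 = J in P_n (each H_{s+1} covers H_s), the identity π_{(K,J)} = π_{H_t}·π_{H_{t−1}}·…·π_{H_1} holds in the monoid NDPF_{n+1}, where for a subset H = {h_1 < … < h_s} of {1,…,n} we set π_H := π_{h_1}·π_{h_2}·…·π_{h_s} (indices in increasing order). In particular the left-hand side is independent of the chosen saturated chain. -/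
set_option linter.unreachableTactic false
set_option linter.unusedTactic false

/-- The monoid of non-decreasing parking functions on `{1, …, n}` (modelled as `Fin n`):
order-preserving functions `f` with `f i ≤ i`, under composition. -/
def NDPF (n : ℕ) : Type :=
  {f : Fin n → Fin n // Monotone f ∧ ∀ i, f i ≤ i}

instance (n : ℕ) : Monoid (NDPF n) where
  mul f g := ⟨f.1 ∘ g.1, (f.2.1.comp g.2.1 : _), fun i => (f.2.2 _).trans (g.2.2 i)⟩
  one := ⟨id, monotone_id, fun _ => le_rfl⟩
  mul_assoc _ _ _ := rfl
  one_mul _ := rfl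
  mul_one _ := rfl

/-- The generator `π_j` of `NDPF (n+1)`: it sends the point `j+1` to `j` and fixes all
other points (here `j : Fin n` represents the paper's `j+1 ∈ {1,…,n}`, and `Fin (n+1)`
represents `{1,…,n+1}` via `i ↦ i+1`). -/
def ndpfPi {n : ℕ} (j : Fin n) : NDPF (n + 1) :=
  ⟨fun i => if (i : ℕ) = (j : ℕ) + 1 then ⟨(j : ℕ), by omega⟩ else i, by
    intro a b hab
    have hab' : (a : ℕ) ≤ (b : ℕ) := hab
    by_cases ha : (a : ℕ) = (j : ℕ) + 1 <;> by_cases hb : (b : ℕ) = (j : ℕ) + 1 <;>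
      simp only [ha, hb, if_pos, if_neg, Fin.le_def] <;> simp <;> omega, by
    intro i
    by_cases hi : (i : ℕ) = (j : ℕ) + 1 <;>
      simp only [hi, if_pos, if_neg, Fin.le_def] <;> simp <;> omega⟩

/-- The product order `⪰` on subsets of `{1,…,n}` (modelled as `Finset (Fin n)`):
`pnLe J K` (i.e. `K ⪰ J`) iff `J` and `K` have the same cardinality and, writing
`J = {j_1 < … < j_r}` and `K = {k_1 < … < k_r}`, one has `j_i ≤ k_i` for all `i`. -/
def pnLe {n : ℕ} (J K : Finset (Fin n)) : Prop :=
  J.card = K.card ∧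
    ∀ (i : ℕ) (hJ : i < (J.sort (· ≤ ·)).length) (hK : i < (K.sort (· ≤ ·)).length),
      (J.sort (· ≤ ·)).get ⟨i, hJ⟩ ≤ (K.sort (· ≤ ·)).get ⟨i, hK⟩

/-- `pnCovBy H' H` : `H` covers `H'` in the product order `P_n` (written `H ⋗ H'`):
`H ⪰ H'`, `H ≠ H'`, and there is nothing strictly in between. -/
def pnCovBy {n : ℕ} (H' H : Finset (Fin n)) : Prop :=
  pnLe H' H ∧ H' ≠ H ∧ ∀ H'' : Finset (Fin n), pnLe H' H'' → pnLe H'' H → H'' = H' ∨ H'' = H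

/-- The block `π_k · π_{k−1} · ⋯ · π_j` in `NDPF (n+1)` (indices decreasing from
`k` down to `j`). -/
def blockProd {n : ℕ} (k j : Fin n) : NDPF (n + 1) :=
  ((List.range ((k : ℕ) + 1 - (j : ℕ))).map
    (fun d => ndpfPi (⟨(k : ℕ) - d, Nat.lt_of_le_of_lt (Nat.sub_le _ _) k.2⟩ : Fin n))).prod

/-- For a subset `H = {h_1 < … < h_s}` of `{1,…,n}`, the product
`π_H = π_{h_1} · π_{h_2} · ⋯ · π_{h_s}` (indices in increasing order). -/
def piSet {n : ℕ} (H : Finset (Fin n)) : NDPF (n + 1) :=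
  ((H.sort (· ≤ ·)).map ndpfPi).prod

/-- For `K ⪰ J` in `P_n` with `K = {k_1 < … < k_r}` and `J = {j_1 < … < j_r}`, the
element `π_{(K,J)} = (π_{k_1}⋯π_{j_1}) · (π_{k_2}⋯π_{j_2}) ⋯ (π_{k_r}⋯π_{j_r})`,
each block having decreasing indices from `k_i` down to `j_i`, the blocks being
multiplied left to right in the order `i = 1, …, r`. -/
def piPair {n : ℕ} (K J : Finset (Fin n)) : NDPF (n + 1) :=
  (List.zipWith blockProd (K.sort (· ≤ ·)) (J.sort (· ≤ ·))).prod

/-!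
Extending by the identity embeds `NDPF (n + 1)` into the monoid of self-maps of `ℕ`. There `π_j`
becomes `x ↦ if x = j + 1 then j else x`, and the block `π_k ⋯ π_j` becomes the map lowering
every `x ∈ (j, k + 1]` by one. A cover `B ⋖ K` in `P_n` raises exactly one entry of `B` by one,
and a direct computation with these maps gives `π_K · π_{(B,J)} = π_{(K,J)}` whenever `J ⪯ B`.
Together with `π_{(K,K)} = π_K`, this yields the identity by induction along the chain.
-/

def piEnd (j : ℕ) : Function.End ℕ := fun x => if x = j + 1 then j else x

def blockEnd (k j : ℕ) : Function.End ℕ := fun x => if j < x ∧ x ≤ k + 1 then x - 1 else x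

def piListEnd (L : List ℕ) : Function.End ℕ := (L.map piEnd).prod

def pairEnd (ks js : List ℕ) : Function.End ℕ := (List.zipWith blockEnd ks js).prod

@[simp]
lemma piListEnd_cons (h : ℕ) (t : List ℕ) : piListEnd (h :: t) = piEnd h * piListEnd t := rfl

@[simp]
lemma pairEnd_cons_cons (k j : ℕ) (ks js : List ℕ) :
    pairEnd (k :: ks) (j :: js) = blockEnd k j * pairEnd ks js := rfl

lemma blockEnd_self (k : ℕ) : blockEnd k k = piEnd k := by
  funext x
  simp only [blockEnd, piEnd]
  split_ifs <;> omega

lemma blockEnd_eq_one {k j : ℕ} (h : k < j) : blockEnd k j = 1 := by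
  funext x
  simp only [blockEnd, Function.End.one_def, id]
  split_ifs <;> omega

lemma piEnd_succ_mul_blockEnd {k j : ℕ} (hj : j ≤ k + 1) :
    piEnd (k + 1) * blockEnd k j = blockEnd (k + 1) j := by
  funext x
  simp only [Function.End.mul_def, Function.comp, piEnd, blockEnd]
  split_ifs <;> omega

lemma prod_range_piEnd (k j : ℕ) :
    ((List.range (k + 1 - j)).map fun d => piEnd (k - d)).prod = blockEnd k j := by
  induction k with
  | zero =>
    rcases Nat.eq_zero_or_pos j with rfl | hj
    · simp [blockEnd_self]
    · simp [Nat.sub_eq_zero_of_le hj, blockEnd_eq_one hj]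
  | succ k ih =>
    rcases Nat.lt_or_ge (k + 1) j with hj | hj
    · simp [Nat.sub_eq_zero_of_le hj, blockEnd_eq_one hj]
    · rw [show k + 1 + 1 - j = k + 1 - j + 1 by omega, List.range_succ_eq_map]
      simp only [List.map_cons, List.map_map, List.prod_cons, Nat.sub_zero, Function.comp_def,
        Nat.succ_sub_succ, ih]
      exact piEnd_succ_mul_blockEnd hj

lemma piListEnd_apply_of_le {L : List ℕ} {m x : ℕ} (hL : ∀ a ∈ L, m ≤ a) (hx : x ≤ m) :
    piListEnd L x = x := by
  induction L with
  | nil => rfl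
  | cons h t ih =>
    have ht : piListEnd t x = x := ih fun a ha => hL a (.tail h ha)
    have hh : m ≤ h := hL h (.head t)
    simp only [piListEnd_cons, Function.End.mul_def, Function.comp, ht, piEnd]
    split_ifs <;> omega

lemma le_piListEnd_apply {L : List ℕ} {m x : ℕ} (hL : ∀ a ∈ L, m ≤ a) (hx : m ≤ x) :
    m ≤ piListEnd L x := by
  induction L with
  | nil => exact hx
  | cons h t ih =>
    have ht : m ≤ piListEnd t x := ih fun a ha => hL a (.tail h ha)
    have hh : m ≤ h := hL h (.head t)
    simp only [piListEnd_cons, Function.End.mul_def, Function.comp, piEnd]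
    split_ifs <;> omega

-- `blockEnd h j` acts inside `[0, h + 1]`, which `piListEnd L` fixes pointwise, and `piListEnd L`
-- preserves `[h + 2, ∞)`.
lemma commute_piListEnd_blockEnd {L : List ℕ} {h : ℕ} (hL : ∀ a ∈ L, h + 1 < a) (j : ℕ) :
    Commute (piListEnd L) (blockEnd h j) := by
  have hL' : ∀ a ∈ L, h + 2 ≤ a := fun a ha => hL a ha
  funext x
  show piListEnd L (blockEnd h j x) = blockEnd h j (piListEnd L x)
  rcases le_or_gt x (h + 1) with hx | hx
  · have hbx : blockEnd h j x ≤ h + 1 := by simp only [blockEnd]; split_ifs <;> omega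
    rw [piListEnd_apply_of_le hL' (by omega), piListEnd_apply_of_le hL' (by omega)]
  · have hLx : h + 2 ≤ piListEnd L x := le_piListEnd_apply hL' hx
    simp only [blockEnd]
    split_ifs <;> omega

-- `blockEnd h j` never takes the value `h + 1`, and agrees with `piEnd h` on `[h + 1, ∞)`, which
-- `piListEnd L` preserves.
lemma piEnd_mul_piListEnd_mul_blockEnd {L : List ℕ} {h j : ℕ} (hL : ∀ a ∈ L, h < a)
    (hj : j ≤ h) : piEnd h * (piListEnd L * blockEnd h j) = blockEnd h j * piListEnd L := by
  have hL' : ∀ a ∈ L, h + 1 ≤ a := fun a ha => hL a ha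
  funext x
  show piEnd h (piListEnd L (blockEnd h j x)) = blockEnd h j (piListEnd L x)
  rcases le_or_gt x (h + 1) with hx | hx
  · have hbx : blockEnd h j x ≤ h + 1 := by simp only [blockEnd]; split_ifs <;> omega
    rw [piListEnd_apply_of_le hL' hbx, piListEnd_apply_of_le hL' hx]
    simp only [piEnd, blockEnd]
    split_ifs <;> omega
  · have hLx : h + 1 ≤ piListEnd L x := le_piListEnd_apply hL' hx.le
    simp only [piEnd, blockEnd]
    split_ifs <;> omega

lemma pairEnd_self : ∀ hs : List ℕ, pairEnd hs hs = piListEnd hs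
  | [] => rfl
  | h :: t => by rw [pairEnd_cons_cons, piListEnd_cons, pairEnd_self t, blockEnd_self]

lemma piListEnd_mul_pairEnd : ∀ {hs js : List ℕ}, hs.Pairwise (· < ·) →
    List.Forall₂ (· ≤ ·) js hs → piListEnd hs * pairEnd hs js = pairEnd hs js
  | [], _, _, .nil => rfl
  | h :: t, j :: jt, hs, .cons hjh hjt => by
    obtain ⟨hht, ht⟩ := List.pairwise_cons.mp hs
    simp only [piListEnd_cons, pairEnd_cons_cons, ← mul_assoc]
    rw [mul_assoc (piEnd h), piEnd_mul_piListEnd_mul_blockEnd hht hjh, mul_assoc,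
      piListEnd_mul_pairEnd ht hjt]

lemma forall_mem_lt_of_forall₂_le {α : Type*} [Preorder α] {c b : List α} {m : α}
    (h : List.Forall₂ (· ≤ ·) c b) (hb : ∀ y ∈ b, y < m) : ∀ x ∈ c, x < m := by
  induction h with
  | nil => simp
  | cons hxy _ ih =>
    simp only [List.mem_cons, forall_eq_or_imp] at hb ⊢
    exact ⟨hxy.trans_lt hb.1, ih hb.2⟩

inductive IncOne : List ℕ → List ℕ → Prop
  | head (h : ℕ) (t : List ℕ) : IncOne (h :: t) ((h + 1) :: t)
  | cons (h : ℕ) {t t' : List ℕ} : IncOne t t' → IncOne (h :: t) (h :: t')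

namespace IncOne

variable {hs ks : List ℕ}

lemma piListEnd_mul_pairEnd (hinc : IncOne hs ks) {js : List ℕ} (hks : ks.Pairwise (· < ·))
    (hjs : List.Forall₂ (· ≤ ·) js hs) : piListEnd ks * pairEnd hs js = pairEnd ks js := by
  induction hinc generalizing js with
  | head h t =>
    obtain ⟨hht, ht⟩ := List.pairwise_cons.mp hks
    obtain _ | ⟨hjh, hjt⟩ := hjs
    simp only [piListEnd_cons, pairEnd_cons_cons, ← mul_assoc]
    rw [mul_assoc (piEnd _), (commute_piListEnd_blockEnd hht _).eq, ← mul_assoc,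
      piEnd_succ_mul_blockEnd (by omega), mul_assoc, _root_.piListEnd_mul_pairEnd ht hjt]
  | cons h _ ih =>
    obtain ⟨hht, ht⟩ := List.pairwise_cons.mp hks
    obtain _ | ⟨hjh, hjt⟩ := hjs
    simp only [piListEnd_cons, pairEnd_cons_cons, ← mul_assoc]
    rw [mul_assoc (piEnd h), piEnd_mul_piListEnd_mul_blockEnd hht hjh, mul_assoc, ih ht hjt]

lemma forall₂_le (hinc : IncOne hs ks) : List.Forall₂ (· ≤ ·) hs ks := by
  induction hinc with
  | head h t => exact .cons (Nat.le_succ h) (List.forall₂_same.mpr fun _ _ => le_rfl)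
  | cons h _ ih => exact .cons le_rfl ih

lemma ne (hinc : IncOne hs ks) : hs ≠ ks := by
  induction hinc with
  | head h t => simp
  | cons h _ ih => simpa using ih

lemma forall_lt {x : ℕ} (hinc : IncOne hs ks) (hx : ∀ a ∈ hs, x < a) : ∀ a ∈ ks, x < a := by
  induction hinc with
  | head h t =>
    simp only [List.mem_cons, forall_eq_or_imp] at hx ⊢
    exact ⟨by omega, hx.2⟩
  | cons h _ ih =>
    simp only [List.mem_cons, forall_eq_or_imp] at hx ⊢
    exact ⟨hx.1, ih hx.2⟩

end IncOne

-- The witness raises by one the last entry of `a` that differs from `b`.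
lemma exists_incOne_forall₂_le : ∀ {a b : List ℕ}, a.Pairwise (· < ·) → b.Pairwise (· < ·) →
    List.Forall₂ (· ≤ ·) a b → a ≠ b →
    ∃ c, IncOne a c ∧ c.Pairwise (· < ·) ∧ List.Forall₂ (· ≤ ·) c b
  | [], [], _, _, .nil, hab => absurd rfl hab
  | x :: a, y :: b, ha, hb, .cons hxy hab, hne => by
    obtain ⟨hxa, ha⟩ := List.pairwise_cons.mp ha
    obtain ⟨hyb, hb⟩ := List.pairwise_cons.mp hb
    by_cases hba : a = b
    · subst hba
      have hxy : x < y := lt_of_le_of_ne hxy fun h => hne (by rw [h])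
      refine ⟨(x + 1) :: a, .head x a, List.pairwise_cons.mpr ⟨fun z hz => ?_, ha⟩, .cons hxy hab⟩
      have := hyb z hz
      omega
    · obtain ⟨c, hc, hcs, hcb⟩ := exists_incOne_forall₂_le ha hb hab hba
      exact ⟨x :: c, .cons x hc, List.pairwise_cons.mpr ⟨hc.forall_lt hxa, hcs⟩, .cons hxy hcb⟩

namespace NDPF

def toEnd (n : ℕ) : NDPF n →* Function.End ℕ where
  toFun f x := if h : x < n then f.1 ⟨x, h⟩ else x
  map_one' := by
    funext x
    show (if h : x < n then x else x) = x
    split <;> rfl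
  map_mul' f g := by
    funext x
    show _ = (if h : _ then (f.1 _ : ℕ) else _)
    by_cases h : x < n
    · simp only [h, dif_pos, Fin.is_lt]
      rfl
    · simp only [h, dif_neg, not_false_eq_true]

variable {n : ℕ}

lemma toEnd_apply_of_lt (f : NDPF n) {x : ℕ} (hx : x < n) : toEnd n f x = f.1 ⟨x, hx⟩ :=
  dif_pos hx

lemma toEnd_apply_of_le (f : NDPF n) {x : ℕ} (hx : n ≤ x) : toEnd n f x = x :=
  dif_neg (Nat.not_lt.mpr hx)

lemma toEnd_injective : Function.Injective (toEnd n) := by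
  intro f g hfg
  apply Subtype.ext
  funext i
  have := congrFun hfg i
  rwa [toEnd_apply_of_lt f i.2, toEnd_apply_of_lt g i.2, Fin.val_inj] at this

end NDPF

lemma toEnd_ndpfPi {n : ℕ} (j : Fin n) : NDPF.toEnd (n + 1) (ndpfPi j) = piEnd j := by
  funext x
  rcases Nat.lt_or_ge x (n + 1) with hx | hx
  · rw [NDPF.toEnd_apply_of_lt _ hx]
    simp only [ndpfPi, piEnd]
    split_ifs <;> rfl
  · rw [NDPF.toEnd_apply_of_le _ hx, piEnd, if_neg (by omega)]

lemma toEnd_blockProd {n : ℕ} (k j : Fin n) :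
    NDPF.toEnd (n + 1) (blockProd k j) = blockEnd k j := by
  rw [blockProd, map_list_prod, List.map_map, ← prod_range_piEnd]
  congr 2
  funext d
  exact toEnd_ndpfPi _

def sortedVals {n : ℕ} (H : Finset (Fin n)) : List ℕ := (H.sort (· ≤ ·)).map Fin.val

lemma toEnd_piSet {n : ℕ} (H : Finset (Fin n)) :
    NDPF.toEnd (n + 1) (piSet H) = piListEnd (sortedVals H) := by
  rw [piSet, map_list_prod, List.map_map, piListEnd, sortedVals, List.map_map]
  congr 2
  funext j
  exact toEnd_ndpfPi j

lemma toEnd_piPair {n : ℕ} (K J : Finset (Fin n)) :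
    NDPF.toEnd (n + 1) (piPair K J) = pairEnd (sortedVals K) (sortedVals J) := by
  rw [piPair, map_list_prod, List.map_zipWith, pairEnd, sortedVals, sortedVals, List.zipWith_map]
  congr 2
  funext k j
  exact toEnd_blockProd k j

section sortedVals

variable {n : ℕ}

lemma sortedVals_pairwise (H : Finset (Fin n)) : (sortedVals H).Pairwise (· < ·) :=
  (Finset.sortedLT_sort H).pairwise.map Fin.val fun _ _ h => h

lemma sortedVals_injective : Function.Injective (sortedVals : Finset (Fin n) → List ℕ) := by
  intro H K h
  have hsort := List.map_injective_iff.mpr Fin.val_injective h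
  ext z
  rw [← Finset.mem_sort (· ≤ ·), hsort, Finset.mem_sort]

lemma exists_sortedVals_eq {c : List ℕ} (hc : c.Pairwise (· < ·)) (hcn : ∀ x ∈ c, x < n) :
    ∃ H : Finset (Fin n), sortedVals H = c := by
  set l : List (Fin n) := c.pmap (fun x hx => ⟨x, hx⟩) hcn
  have hl : l.Pairwise (· < ·) := hc.pmap hcn fun _ _ _ _ h => h
  refine ⟨l.toFinset, ?_⟩
  rw [sortedVals, (List.toFinset_sort _ hl.nodup).mpr (hl.imp le_of_lt), List.map_pmap]
  exact List.pmap_eq_self.mpr fun _ _ => rfl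

lemma pnLe_iff_forall₂ {J K : Finset (Fin n)} :
    pnLe J K ↔ List.Forall₂ (· ≤ ·) (sortedVals J) (sortedVals K) := by
  simp [pnLe, sortedVals, List.forall₂_iff_get]

lemma sortedVals_lt (H : Finset (Fin n)) : ∀ x ∈ sortedVals H, x < n := by
  simp [sortedVals]

lemma pnLe_refl (K : Finset (Fin n)) : pnLe K K :=
  pnLe_iff_forall₂.mpr (List.forall₂_refl _)

lemma pnLe_trans {A B C : Finset (Fin n)} (hAB : pnLe A B) (hBC : pnLe B C) : pnLe A C := by
  refine ⟨hAB.1.trans hBC.1, fun i hA hC => ?_⟩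
  have hB : i < (B.sort (· ≤ ·)).length := by
    rw [Finset.length_sort] at hA ⊢
    exact hAB.1 ▸ hA
  exact (hAB.2 i hA hB).trans (hBC.2 i hB hC)

lemma pnCovBy.incOne {H K : Finset (Fin n)} (h : pnCovBy H K) :
    IncOne (sortedVals H) (sortedVals K) := by
  obtain ⟨hHK, hne, hmin⟩ := h
  obtain ⟨c, hinc, hc, hcK⟩ := exists_incOne_forall₂_le (sortedVals_pairwise H)
    (sortedVals_pairwise K) (pnLe_iff_forall₂.mp hHK) (sortedVals_injective.ne hne)
  obtain ⟨C, rfl⟩ := exists_sortedVals_eq hc (forall_mem_lt_of_forall₂_le hcK (sortedVals_lt K))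
  rcases hmin C (pnLe_iff_forall₂.mpr hinc.forall₂_le) (pnLe_iff_forall₂.mpr hcK) with rfl | rfl
  · exact absurd rfl hinc.ne
  · exact hinc

lemma piPair_self (K : Finset (Fin n)) : piPair K K = piSet K :=
  NDPF.toEnd_injective <| by rw [toEnd_piPair, toEnd_piSet, pairEnd_self]

lemma piPair_eq_piSet_mul_of_pnCovBy {K B J : Finset (Fin n)} (hBK : pnCovBy B K)
    (hJB : pnLe J B) : piPair K J = piSet K * piPair B J :=
  NDPF.toEnd_injective <| by
    rw [map_mul, toEnd_piPair, toEnd_piPair, toEnd_piSet,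
      hBK.incOne.piListEnd_mul_pairEnd (sortedVals_pairwise K) (pnLe_iff_forall₂.mp hJB)]

lemma pnLe_getLast_head {l : List (Finset (Fin n))} (hne : l ≠ [])
    (hl : l.IsChain fun a b => pnCovBy b a) : pnLe (l.getLast hne) (l.head hne) :=
  hl.induction (fun x => pnLe x (l.head hne)) l (fun _ _ hxy hx => pnLe_trans hxy.1 hx)
    (fun _ => pnLe_refl _) _ (List.getLast_mem hne)

lemma piPair_head_getLast : ∀ (l : List (Finset (Fin n))) (hne : l ≠ []),
    l.IsChain (fun a b => pnCovBy b a) → piPair (l.head hne) (l.getLast hne) = (l.map piSet).prod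
  | [K], _, _ => by simp [piPair_self]
  | K :: B :: t, _, hl => by
    obtain ⟨hBK, ht⟩ := List.isChain_cons_cons.mp hl
    rw [List.map_cons, List.prod_cons, ← piPair_head_getLast (B :: t) (List.cons_ne_nil _ _) ht]
    exact piPair_eq_piSet_mul_of_pnCovBy hBK (pnLe_getLast_head _ ht)

end sortedVals

theorem piPair_eq_chain_prod_general (n : ℕ) (K J : Finset (Fin n))
    (l : List (Finset (Fin n))) (hne : l ≠ [])
    (hhead : l.head hne = K) (hlast : l.getLast hne = J)
    (hchain : l.Chain' (fun a b => pnCovBy b a)) :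
    piPair K J = (l.map piSet).prod := by
  rw [← hhead, ← hlast]
  exact piPair_head_getLast l hne hchain

/-- Let `n ≥ 1` and `K ⪰ J` in `P_n`.  For every saturated chain
`K = H_t ⋗ H_{t−1} ⋗ … ⋗ H_1 = J` in `P_n` (given as the list `l = [H_t, …, H_1]`),
the identity `π_{(K,J)} = π_{H_t} · π_{H_{t−1}} · ⋯ · π_{H_1}` holds in `NDPF_{n+1}`;
in particular the right-hand side is independent of the chosen saturated chain. -/
theorem piPair_eq_chain_prod (n : ℕ) (hn : 1 ≤ n) (K J : Finset (Fin n))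
    (hKJ : pnLe J K) (l : List (Finset (Fin n))) (hne : l ≠ [])
    (hhead : l.head hne = K) (hlast : l.getLast hne = J)
    (hchain : l.Chain' (fun a b => pnCovBy b a)) :
    piPair K J = (l.map piSet).prod :=
  piPair_eq_chain_prod_general n K J l hne hhead hlast hchain
end

section
/- Let R be a field and n ≥ 1, and let A := MonoidAlgebra R NDPF_{n+1}. Then the family (f(J))_{J ⊆ {1,…,n}} is a complete system of pairwise orthogonal idempotents of A: f(J)·f(J) = f(J) for every J, f(J)·f(K) = 0 for all J ≠ K, and Σ_{J ⊆ {1,…,n}} f(J) = 1. -/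
/-!
The generators `p j` satisfy `p j * p j = p j`, `p i * p j = p j * p i` for `i + 2 ≤ j`, and
`p i p(i+1) p i = p(i+1) p i p(i+1) = p i p(i+1)`; the whole argument takes place in an arbitrary
ring containing such elements.

Every step of the recursions for `y` and `g` has the shape `(1 - e) * x₁ + x₂ * e` with
`e = p (m+1)` and `x₁, x₂` in the subring generated by `p 1, …, p m`. That subring stabilises the
right ideal `e * A`, and on this stabiliser the combination `(x₁, x₂) ↦ (1 - e) * x₁ + x₂ * e` is
multiplicative. By induction on `m` this gives `y(m,k) * y(m,l) = y(m, max k l)` and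
`g(m,J) * g(m,K) = δ_{JK} g(m,J)` when `|J| = |K|`. A commutator exchange
`[p (m+1), p m] * y(m,k) = y(m,k-1) * [p (m+1), p m]` shows that `y(n,k)` commutes with every
`p j`. Hence the `z(k)` are orthogonal idempotents, central in the subalgebra generated by the
`p j`, with telescoping sum `1`; and `∑_{|J| = k} g(n,J) = y(n,k)` acts as `1` on `z(k)`, so the
`f(J) = g(n,J) z(|J|)` inherit all three properties.
-/

set_option linter.unreachableTactic false
set_option linter.unusedTactic false

namespace NDPFIdem

variable (R : Type) [Field R]

/-- The image `p_j` of the generator `π_j` (for `1 ≤ j ≤ n`) in the monoid algebra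
`A = MonoidAlgebra R NDPF_{n+1}` (junk value `1` outside this range). -/
noncomputable def pgen (n : ℕ) (j : ℕ) : MonoidAlgebra R (NDPF (n + 1)) :=
  if h : 1 ≤ j ∧ j ≤ n then
    MonoidAlgebra.of R (NDPF (n + 1)) (ndpfPi (⟨j - 1, by omega⟩ : Fin n)) else 1

/-- The elements `y(m,k) ∈ A` defined recursively: `y(1,1) = p₁`; `y(m,k) = 0` for
`k > m`; `y(m,1) = y(m−1,1) − p_m·y(m−1,1) + p_m`; and
`y(m,k) = y(m−1,k) − p_m·y(m−1,k) + y(m−1,k−1)·p_m` for `2 ≤ k ≤ m`. -/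
noncomputable def yel (n : ℕ) : ℕ → ℕ → MonoidAlgebra R (NDPF (n + 1))
  | 0, _ => 0
  | 1, k => if k = 1 then pgen R n 1 else 0
  | m + 2, k =>
      if k = 1 then
        yel n (m + 1) 1 - pgen R n (m + 2) * yel n (m + 1) 1 + pgen R n (m + 2)
      else if 2 ≤ k ∧ k ≤ m + 2 then
        yel n (m + 1) k - pgen R n (m + 2) * yel n (m + 1) k
          + yel n (m + 1) (k - 1) * pgen R n (m + 2)
      else 0

/-- The central elements `z(k) ∈ A`: `z(0) = 1 − y(n,1)` and
`z(k) = y(n,k) − y(n,k+1)` for `1 ≤ k ≤ n`. -/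
noncomputable def zel (n : ℕ) (k : ℕ) : MonoidAlgebra R (NDPF (n + 1)) :=
  if k = 0 then 1 - yel R n n 1 else yel R n n k - yel R n n (k + 1)

/-- The elements `g(m,J) ∈ A` for `∅ ≠ J ⊆ {1,…,m}`, defined recursively:
`g(1,{1}) = p₁`; `g(m,J) = g(m−1,J) − p_m·g(m−1,J)` if `m ∉ J`; `g(m,{m}) = p_m`;
and `g(m,J) = g(m−1, J \ {m})·p_m` if `m ∈ J ≠ {m}` (junk values otherwise). -/
noncomputable def gel (n : ℕ) : ℕ → Finset ℕ → MonoidAlgebra R (NDPF (n + 1))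
  | 0, _ => 0
  | 1, J => if J = {1} then pgen R n 1 else 0
  | m + 2, J =>
      if (m + 2) ∉ J then gel n (m + 1) J - pgen R n (m + 2) * gel n (m + 1) J
      else if J = {m + 2} then pgen R n (m + 2)
      else gel n (m + 1) (J.erase (m + 2)) * pgen R n (m + 2)

/-- The idempotents `f(J) ∈ A` for `J ⊆ {1,…,n}`: `f(∅) = z(0)` and
`f(J) = g(n,J)·z(|J|)` for `J ≠ ∅`. -/
noncomputable def fel (n : ℕ) (J : Finset ℕ) : MonoidAlgebra R (NDPF (n + 1)) :=
  if J = ∅ then zel R n 0 else gel R n n J * zel R n J.card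

structure NDPFRelations {M : Type*} [Monoid M] (p : ℕ → M) : Prop where
  idem : ∀ i, IsIdempotentElem (p i)
  comm : ∀ {i j}, i + 2 ≤ j → Commute (p i) (p j)
  braid_left : ∀ i, p i * p (i + 1) * p i = p i * p (i + 1)
  braid_right : ∀ i, p (i + 1) * p i * p (i + 1) = p i * p (i + 1)

theorem NDPFRelations.map {M N : Type*} [Monoid M] [Monoid N] {p : ℕ → M}
    (hp : NDPFRelations p) (φ : M →* N) : NDPFRelations (φ ∘ p) where
  idem i := (hp.idem i).map φ
  comm h := (hp.comm h).map φ
  braid_left i := by simp only [Function.comp_apply, ← map_mul, hp.braid_left i]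
  braid_right i := by simp only [Function.comp_apply, ← map_mul, hp.braid_right i]

theorem _root_.Finset.sum_powersetCard_succ_insert {α M : Type*} [DecidableEq α] [AddCommMonoid M]
    {a : α} {s : Finset α} (ha : a ∉ s) (k : ℕ) (f : Finset α → M) :
    ∑ J ∈ (insert a s).powersetCard (k + 1), f J
      = ∑ J ∈ s.powersetCard (k + 1), f J + ∑ J ∈ s.powersetCard k, f (insert a J) := by
  have hdisj : Disjoint (s.powersetCard (k + 1)) ((s.powersetCard k).image (insert a)) := by
    simp only [Finset.disjoint_left, Finset.mem_image, Finset.mem_powersetCard]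
    rintro J ⟨hJ, -⟩ ⟨J', -, rfl⟩
    exact ha (hJ (Finset.mem_insert_self _ _))
  have hinj : Set.InjOn (insert a) (s.powersetCard k : Set (Finset α)) := by
    intro J hJ J' hJ' h
    simp only [Finset.mem_coe, Finset.mem_powersetCard] at hJ hJ'
    rw [← Finset.erase_insert (Finset.notMem_mono hJ.1 ha),
      ← Finset.erase_insert (Finset.notMem_mono hJ'.1 ha), h]
  rw [Finset.powersetCard_succ_insert ha, Finset.sum_union hdisj, Finset.sum_image hinj]

theorem erase_subset_Icc_one {m : ℕ} {J : Finset ℕ} (hJ : J ⊆ Finset.Icc 1 (m + 1)) :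
    J.erase (m + 1) ⊆ Finset.Icc 1 m := fun x hx => by
  have := hJ (Finset.mem_of_mem_erase hx)
  grind

section Mix

variable {A : Type*} [Ring A] {e : A}

/-- The stabiliser of the right ideal `e * A`. -/
def idemStab (he : IsIdempotentElem e) : Subring A where
  carrier := {x | e * x * e = x * e}
  mul_mem' {x y} hx hy := by
    change e * (x * y) * e = x * y * e
    have expand : e * (x * y) * e - x * y * e
        = (e * x * e - x * e) * y * e - (e * x - x) * (e * y * e - y * e) := by noncomm_ring
    rw [← sub_eq_zero, expand, hx, hy]
    simp
  one_mem' := by simp [he.eq]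
  add_mem' {x y} hx hy := by simp only [Set.mem_ofPred_eq, mul_add, add_mul] at *; rw [hx, hy]
  zero_mem' := by simp
  neg_mem' {x} hx := by simp only [Set.mem_ofPred_eq, mul_neg, neg_mul] at *; rw [hx]

theorem mem_idemStab {he : IsIdempotentElem e} {x : A} : x ∈ idemStab he ↔ e * x * e = x * e :=
  Iff.rfl

def mix (e x y : A) : A := (1 - e) * x + y * e

theorem mix_mem {S : Subring A} {x y : A} (he : e ∈ S) (hx : x ∈ S) (hy : y ∈ S) :
    mix e x y ∈ S :=
  S.add_mem (S.mul_mem (S.sub_mem S.one_mem he) hx) (S.mul_mem hy he)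

theorem commute_mix {b x y : A} (he : Commute b e) (hx : Commute b x) (hy : Commute b y) :
    Commute b (mix e x y) :=
  (((Commute.one_right b).sub_right he).mul_right hx).add_right (hy.mul_right he)

theorem mix_mul_mix (he : IsIdempotentElem e) {x₁ x₂ y₁ y₂ : A} (hx₁ : x₁ ∈ idemStab he)
    (hy₂ : y₂ ∈ idemStab he) : mix e x₁ x₂ * mix e y₁ y₂ = mix e (x₁ * y₁) (x₂ * y₂) := by
  have hxy : e * (x₁ * y₂) * e = x₁ * y₂ * e := (idemStab he).mul_mem hx₁ hy₂
  rw [mem_idemStab] at hx₁ hy₂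
  have expand : mix e x₁ x₂ * mix e y₁ y₂ = mix e (x₁ * y₁) (x₂ * y₂)
      + (e * x₁ * e - x₁ * e) * y₁ + (x₁ * y₂ * e - e * (x₁ * y₂) * e)
      + x₂ * (e - e * e) * y₁ + x₂ * (e * y₂ * e - y₂ * e) := by
    unfold mix; noncomm_ring
  rw [expand, hx₁, hy₂, hxy, he.eq]
  simp

theorem commute_mix_self (he : IsIdempotentElem e) {x y : A} (hx : x ∈ idemStab he)
    (hy : y ∈ idemStab he) : Commute e (mix e x y) := by
  rw [mem_idemStab] at hx hy
  have expand : e * mix e x y - mix e x y * e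
      = (e - e * e) * x + (e * y * e - y * e) + (e * x * e - x * e) + y * (e - e * e) := by
    unfold mix; noncomm_ring
  rw [Commute, SemiconjBy, ← sub_eq_zero, expand, hx, hy, he.eq]
  simp

theorem commutator_mul_mix (he : IsIdempotentElem e) {a x y z : A} (hab : e * a * e = e * a)
    (hy : y ∈ idemStab he) (hay : Commute a y) :
    (a * e - e * a) * mix e x y = mix e y z * (a * e - e * a) := by
  rw [mem_idemStab] at hy
  have expand : (a * e - e * a) * mix e x y - mix e y z * (a * e - e * a)
      = a * (e - e * e) * x + (e * a * e - e * a) * x + a * (e * y * e - y * e)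
        + (a * y - y * a) * e - e * (a * y - y * a) * e - (e * y * e - y * e) * a
        - z * (e * a * e - e * a) + z * (e * e * a - e * a) := by
    unfold mix; noncomm_ring
  rw [← sub_eq_zero, expand, hy, hab, hay.eq, he.eq]
  simp

theorem commute_mix_of_commutator {b x y : A} (hx : Commute b x) (hy : Commute b y)
    (h : (e * b - b * e) * x = y * (e * b - b * e)) : Commute b (mix e x y) := by
  have expand : b * mix e x y - mix e x y * b = ((e * b - b * e) * x - y * (e * b - b * e))
      + (b * x - x * b) - e * (b * x - x * b) + (b * y - y * b) * e := by
    unfold mix; noncomm_ring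
  rw [Commute, SemiconjBy, ← sub_eq_zero, expand, h, hx.eq, hy.eq]
  simp

end Mix

section Elements

variable {A : Type*} [Ring A] (p : ℕ → A)

-- `yElt p m 0 = 1` and `gElt p m ∅ = 1` extend the paper's `y(m,k)` and `g(m,J)`, so that
-- `z(0) = y(n,0) - y(n,1)` and `f(∅) = g(n,∅) z(0)` need no separate case.
def yElt : ℕ → ℕ → A
  | _, 0 => 1
  | 0, _ + 1 => 0
  | m + 1, k + 1 => mix (p (m + 1)) (yElt m (k + 1)) (yElt m k)

def gElt : ℕ → Finset ℕ → A
  | 0, J => if J = ∅ then 1 else 0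
  | m + 1, J =>
      if m + 1 ∈ J then gElt m (J.erase (m + 1)) * p (m + 1)
      else if J = ∅ then 1 else (1 - p (m + 1)) * gElt m J

def zElt (n k : ℕ) : A := yElt p n k - yElt p n (k + 1)

def fElt (n : ℕ) (J : Finset ℕ) : A := gElt p n J * zElt p n J.card

@[simp]
theorem yElt_zero_right (m : ℕ) : yElt p m 0 = 1 := by cases m <;> rfl

theorem yElt_succ (m k : ℕ) :
    yElt p (m + 1) k = mix (p (m + 1)) (yElt p m k) (yElt p m (k - 1)) := by
  cases k with
  | zero => simp [mix]
  | succ k => rfl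

theorem yElt_of_lt : ∀ {m k : ℕ}, m < k → yElt p m k = 0
  | 0, _ + 1, _ => rfl
  | m + 1, k + 1, h => by
    rw [yElt, yElt_of_lt (by omega), yElt_of_lt (by omega)]
    simp [mix]

theorem yElt_mem (S : Subring A) {m : ℕ} (k : ℕ) (hS : ∀ i ∈ Set.Icc 1 m, p i ∈ S) :
    yElt p m k ∈ S := by
  induction m generalizing k with
  | zero => cases k <;> simp [yElt, S.one_mem, S.zero_mem]
  | succ m ih =>
    have ih' : ∀ k, yElt p m k ∈ S := fun k => ih k fun i hi => hS i ⟨hi.1, by grind⟩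
    rw [yElt_succ]
    exact mix_mem (hS _ ⟨by omega, le_rfl⟩) (ih' k) (ih' (k - 1))

@[simp]
theorem gElt_empty (m : ℕ) : gElt p m ∅ = 1 := by cases m <;> simp [gElt]

theorem gElt_succ {m : ℕ} {J : Finset ℕ} (hJ : J ≠ ∅) :
    gElt p (m + 1) J = mix (p (m + 1)) (if m + 1 ∈ J then 0 else gElt p m J)
      (if m + 1 ∈ J then gElt p m (J.erase (m + 1)) else 0) := by
  by_cases h : m + 1 ∈ J <;> simp [gElt, mix, h, hJ]

theorem gElt_mem (S : Subring A) {m : ℕ} (J : Finset ℕ) (hS : ∀ i ∈ Set.Icc 1 m, p i ∈ S) :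
    gElt p m J ∈ S := by
  induction m generalizing J with
  | zero => simp only [gElt]; split <;> simp [S.one_mem, S.zero_mem]
  | succ m ih =>
    have ih' : ∀ J, gElt p m J ∈ S := fun J => ih J fun i hi => hS i ⟨hi.1, by grind⟩
    by_cases hJ : J = ∅
    · simp [hJ, S.one_mem]
    rw [gElt_succ p hJ]
    exact mix_mem (hS _ ⟨by omega, le_rfl⟩) (by split <;> simp [ih', S.zero_mem])
      (by split <;> simp [ih', S.zero_mem])

theorem sum_gElt_powersetCard (m k : ℕ) :
    ∑ J ∈ (Finset.Icc 1 m).powersetCard k, gElt p m J = yElt p m k := by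
  induction m generalizing k with
  | zero =>
    cases k with
    | zero => simp
    | succ k => rw [Finset.powersetCard_eq_empty.2 (by simp)]; rfl
  | succ m ih =>
    cases k with
    | zero => simp
    | succ k =>
      have hm : m + 1 ∉ Finset.Icc 1 m := by simp
      rw [← Finset.insert_Icc_right_eq_Icc_add_one (by omega),
        Finset.sum_powersetCard_succ_insert hm, yElt, mix, ← ih, ← ih, Finset.mul_sum,
        Finset.sum_mul]
      congr 1
      · refine Finset.sum_congr rfl fun J hJ => ?_
        rw [Finset.mem_powersetCard] at hJ
        rw [gElt, if_neg (Finset.notMem_mono hJ.1 hm), if_neg (by rintro rfl; simp at hJ)]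
      · refine Finset.sum_congr rfl fun J hJ => ?_
        rw [gElt, if_pos (Finset.mem_insert_self _ _),
          Finset.erase_insert (Finset.notMem_mono (Finset.mem_powersetCard.1 hJ).1 hm)]

end Elements

namespace NDPFRelations

variable {A : Type*} [Ring A] {p : ℕ → A}

theorem mem_idemStab_of_le (hp : NDPFRelations p) {i m : ℕ} (h : i ≤ m) :
    p i ∈ idemStab (hp.idem (m + 1)) := by
  rw [mem_idemStab]
  rcases h.lt_or_eq with h | rfl
  · rw [← (hp.comm (by omega)).eq, mul_assoc, (hp.idem _).eq]
  · exact hp.braid_right i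

theorem yElt_mem_idemStab (hp : NDPFRelations p) (m k : ℕ) :
    yElt p m k ∈ idemStab (hp.idem (m + 1)) :=
  yElt_mem p _ k fun _ hi => hp.mem_idemStab_of_le hi.2

theorem gElt_mem_idemStab (hp : NDPFRelations p) (m : ℕ) (J : Finset ℕ) :
    gElt p m J ∈ idemStab (hp.idem (m + 1)) :=
  gElt_mem p _ J fun _ hi => hp.mem_idemStab_of_le hi.2

theorem commute_yElt_of_add_two_le (hp : NDPFRelations p) {j m : ℕ} (h : m + 2 ≤ j) (k : ℕ) :
    Commute (p j) (yElt p m k) := by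
  have hS : ∀ i ∈ Set.Icc 1 m, p i ∈ Subring.centralizer {p j} := fun i hi =>
    Subring.mem_centralizer_iff.2 fun _ hg => by
      rw [Set.mem_singleton_iff.1 hg]
      exact (hp.comm (show i + 2 ≤ j by grind)).eq.symm
  exact Subring.mem_centralizer_iff.1 (yElt_mem p _ k hS) _ rfl

theorem commutator_mul_yElt (hp : NDPFRelations p) (m k : ℕ) :
    (p (m + 2) * p (m + 1) - p (m + 1) * p (m + 2)) * yElt p (m + 1) k
      = yElt p (m + 1) (k - 1) * (p (m + 2) * p (m + 1) - p (m + 1) * p (m + 2)) := by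
  cases k with
  | zero => simp
  | succ k =>
    rw [yElt_succ, yElt_succ, Nat.add_sub_cancel]
    exact commutator_mul_mix (hp.idem (m + 1)) (hp.braid_left (m + 1))
      (hp.yElt_mem_idemStab m k) (hp.commute_yElt_of_add_two_le le_rfl k)

theorem commute_yElt (hp : NDPFRelations p) {j m : ℕ} (hj : j ∈ Set.Icc 1 m) (k : ℕ) :
    Commute (p j) (yElt p m k) := by
  induction m generalizing j k with
  | zero => grind
  | succ m ih =>
    rw [yElt_succ]
    obtain h | rfl | rfl : j < m ∨ j = m ∨ j = m + 1 := by grind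
    · exact commute_mix (hp.comm (by omega)) (ih ⟨hj.1, h.le⟩ _) (ih ⟨hj.1, h.le⟩ _)
    · obtain ⟨i, rfl⟩ : ∃ i, j = i + 1 := ⟨j - 1, by grind⟩
      exact commute_mix_of_commutator (ih ⟨hj.1, le_rfl⟩ _) (ih ⟨hj.1, le_rfl⟩ _)
        (hp.commutator_mul_yElt i k)
    · exact commute_mix_self _ (hp.yElt_mem_idemStab m k) (hp.yElt_mem_idemStab m (k - 1))

theorem yElt_mul_yElt (hp : NDPFRelations p) (m k l : ℕ) :
    yElt p m k * yElt p m l = yElt p m (max k l) := by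
  induction m generalizing k l with
  | zero => cases k <;> cases l <;> simp [yElt]
  | succ m ih =>
    rw [yElt_succ, yElt_succ, yElt_succ, mix_mul_mix (hp.idem (m + 1))
      (hp.yElt_mem_idemStab m k) (hp.yElt_mem_idemStab m (l - 1)), ih, ih,
      show max (k - 1) (l - 1) = max k l - 1 by omega]

theorem gElt_mul_gElt (hp : NDPFRelations p) {m : ℕ} {J K : Finset ℕ}
    (hJ : J ⊆ Finset.Icc 1 m) (hK : K ⊆ Finset.Icc 1 m) (hJK : J.card = K.card) :
    gElt p m J * gElt p m K = if J = K then gElt p m J else 0 := by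
  induction m generalizing J K with
  | zero =>
    rw [Finset.Icc_eq_empty (by omega), Finset.subset_empty] at hJ hK
    simp [hJ, hK]
  | succ m ih =>
    obtain rfl | hJ0 := eq_or_ne J ∅
    · rw [Finset.card_empty, eq_comm, Finset.card_eq_zero] at hJK
      simp [hJK]
    have hK0 : K ≠ ∅ := by rintro rfl; simp_all
    have hStab : ∀ (P : Prop) [Decidable P] (L : Finset ℕ),
        (if P then 0 else gElt p m L) ∈ idemStab (hp.idem (m + 1)) ∧
        (if P then gElt p m L else 0) ∈ idemStab (hp.idem (m + 1)) := fun P _ L => by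
      split <;> simp [hp.gElt_mem_idemStab]
    rw [gElt_succ p hJ0, gElt_succ p hK0, mix_mul_mix _ (hStab _ _).1 (hStab _ _).2]
    by_cases hmJ : m + 1 ∈ J <;> by_cases hmK : m + 1 ∈ K <;>
      simp only [hmJ, hmK, ↓reduceIte, mul_zero, zero_mul]
    · have hJK' : J.erase (m + 1) = K.erase (m + 1) ↔ J = K :=
        ⟨fun h => by rw [← Finset.insert_erase hmJ, h, Finset.insert_erase hmK], by rintro rfl; rfl⟩
      rw [ih (erase_subset_Icc_one hJ) (erase_subset_Icc_one hK)
        (by rw [Finset.card_erase_of_mem hmJ, Finset.card_erase_of_mem hmK, hJK])]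
      simp only [hJK']
      split_ifs <;> simp [mix]
    · have hne : J ≠ K := by rintro rfl; exact hmK hmJ
      simp [hne, mix]
    · have hne : J ≠ K := by rintro rfl; exact hmJ hmK
      simp [hne, mix]
    · rw [ih (Finset.erase_eq_of_notMem hmJ ▸ erase_subset_Icc_one hJ)
        (Finset.erase_eq_of_notMem hmK ▸ erase_subset_Icc_one hK) hJK]
      split_ifs <;> simp [mix]

theorem zElt_mul_zElt (hp : NDPFRelations p) (n k l : ℕ) :
    zElt p n k * zElt p n l = if k = l then zElt p n k else 0 := by
  simp only [zElt, sub_mul, mul_sub, hp.yElt_mul_yElt]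
  obtain h | rfl | h := lt_trichotomy k l
  · rw [max_eq_right h.le, max_eq_right (by omega : k ≤ l + 1), max_eq_right h,
      max_eq_right (by omega : k + 1 ≤ l + 1), if_neg h.ne]
    abel
  · simp
  · rw [max_eq_left h.le, max_eq_left (by omega : l + 1 ≤ k), max_eq_left (by omega : l ≤ k + 1),
      max_eq_left (by omega : l + 1 ≤ k + 1), if_neg h.ne']
    abel

theorem yElt_mul_zElt (hp : NDPFRelations p) (n k : ℕ) :
    yElt p n k * zElt p n k = zElt p n k := by
  rw [zElt, mul_sub, hp.yElt_mul_yElt, hp.yElt_mul_yElt, max_self, max_eq_right (Nat.le_succ k)]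

theorem commute_zElt_gElt (hp : NDPFRelations p) (n k : ℕ) (J : Finset ℕ) :
    Commute (zElt p n k) (gElt p n J) := by
  have hS : ∀ i ∈ Set.Icc 1 n, p i ∈ Subring.centralizer {zElt p n k} := fun i hi =>
    Subring.mem_centralizer_iff.2 fun _ hg => by
      rw [Set.mem_singleton_iff.1 hg]
      exact ((hp.commute_yElt hi k).sub_right (hp.commute_yElt hi (k + 1))).eq.symm
  exact Subring.mem_centralizer_iff.1 (gElt_mem p _ J hS) _ rfl

theorem fElt_mul_fElt (hp : NDPFRelations p) {n : ℕ} {J K : Finset ℕ}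
    (hJ : J ⊆ Finset.Icc 1 n) (hK : K ⊆ Finset.Icc 1 n) :
    fElt p n J * fElt p n K = if J = K then fElt p n J else 0 := by
  rw [fElt, fElt, (hp.commute_zElt_gElt n _ K).mul_mul_mul_comm, hp.zElt_mul_zElt]
  by_cases hc : J.card = K.card
  · rw [hp.gElt_mul_gElt hJ hK hc, if_pos hc]
    split_ifs <;> simp
  · rw [if_neg hc, if_neg (by rintro rfl; exact hc rfl), mul_zero]

theorem sum_fElt (hp : NDPFRelations p) (n : ℕ) :
    ∑ J ∈ (Finset.Icc 1 n).powerset, fElt p n J = 1 := by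
  have hcard (k : ℕ) : ∑ J ∈ (Finset.Icc 1 n).powersetCard k, fElt p n J
      = yElt p n k - yElt p n (k + 1) := by
    change _ = zElt p n k
    rw [← hp.yElt_mul_zElt, ← sum_gElt_powersetCard, Finset.sum_mul]
    exact Finset.sum_congr rfl fun J hJ => by rw [fElt, (Finset.mem_powersetCard.1 hJ).2]
  rw [Finset.sum_powerset, Nat.card_Icc, Nat.add_sub_cancel,
    Finset.sum_congr rfl fun k _ => hcard k, Finset.sum_range_sub', yElt_zero_right, yElt_of_lt p (Nat.lt_succ_self n), sub_zero]

end NDPFRelations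

theorem NDPF.ext_val {n : ℕ} {f g : NDPF n} (h : ∀ i, (f.1 i : ℕ) = g.1 i) : f = g :=
  Subtype.ext (funext fun i => Fin.ext (h i))

theorem NDPF.mul_apply {n : ℕ} (f g : NDPF n) (i : Fin n) : (f * g).1 i = f.1 (g.1 i) := rfl

def ndpfGen (n j : ℕ) : NDPF (n + 1) :=
  if h : 1 ≤ j ∧ j ≤ n then ndpfPi ⟨j - 1, by omega⟩ else 1

theorem ndpfGen_apply (n j : ℕ) (i : Fin (n + 1)) :
    ((ndpfGen n j).1 i : ℕ) = if (i : ℕ) = j then j - 1 else i := by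
  by_cases h : 1 ≤ j ∧ j ≤ n
  · rw [ndpfGen, dif_pos h, ndpfPi]
    split_ifs <;> simp_all
  · rw [ndpfGen, dif_neg h]
    change (i : ℕ) = _
    split_ifs <;> omega

theorem ndpfRelations_ndpfGen (n : ℕ) : NDPFRelations (ndpfGen n) := by
  refine ⟨fun i => ?_, fun {i j} h => ?_, fun i => ?_, fun i => ?_⟩ <;>
    refine NDPF.ext_val fun x => ?_ <;>
    simp only [NDPF.mul_apply, ndpfGen_apply] <;> split_ifs <;> omega

theorem pgen_eq_comp (n : ℕ) : pgen R n = MonoidAlgebra.of R (NDPF (n + 1)) ∘ ndpfGen n := by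
  funext j
  simp only [pgen, ndpfGen, Function.comp_apply]
  split_ifs <;> simp [MonoidAlgebra.one_def]

theorem ndpfRelations_pgen (n : ℕ) : NDPFRelations (pgen R n) :=
  pgen_eq_comp R n ▸ (ndpfRelations_ndpfGen n).map _

theorem yel_eq_yElt {n : ℕ} : ∀ (m : ℕ) {k : ℕ}, k ≠ 0 → yel R n m k = yElt (pgen R n) m k
  | 0, _ + 1, _ => rfl
  | 1, k + 1, _ => by cases k <;> simp [yel, yElt, mix]
  | m + 2, k + 1, _ => by
    rw [yel, yElt, show m + 1 + 1 = m + 2 from rfl]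
    rcases k with _ | k
    · rw [if_pos rfl, yel_eq_yElt (m + 1) one_ne_zero, yElt_zero_right, mix]
      noncomm_ring
    · rw [if_neg (by omega)]
      split_ifs with h
      · rw [yel_eq_yElt (m + 1) (by omega), yel_eq_yElt (m + 1) (by omega), mix, sub_mul,
          one_mul, Nat.add_sub_cancel]
      · rw [yElt_of_lt _ (by omega), yElt_of_lt _ (by omega)]
        simp [mix]

theorem gel_eq_gElt {n : ℕ} :
    ∀ (m : ℕ) {J : Finset ℕ}, J ≠ ∅ → gel R n m J = gElt (pgen R n) m J
  | 0, J, hJ => by simp [gel, gElt, hJ]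
  | 1, J, hJ => by
    by_cases h1 : 1 ∈ J
    · have : J = {1} ↔ J.erase 1 = ∅ := by simp [Finset.erase_eq_empty_iff, hJ]
      simp only [gel, gElt, h1, this]
      split_ifs <;> simp
    · have : J ≠ {1} := by rintro rfl; simp at h1
      simp [gel, gElt, h1, hJ, this]
  | m + 2, J, hJ => by
    rw [gel, gElt]
    by_cases hm : m + 2 ∈ J
    · rw [if_neg (not_not.2 hm), if_pos hm]
      split_ifs with h
      · simp [h]
      · rw [gel_eq_gElt (m + 1) (by simp [Finset.erase_eq_empty_iff, hJ, h])]
    · rw [if_pos hm, if_neg hm, if_neg hJ, gel_eq_gElt (m + 1) hJ, sub_mul, one_mul]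

theorem zel_eq_zElt (n k : ℕ) : zel R n k = zElt (pgen R n) n k := by
  rw [zel, zElt]
  split_ifs with h
  · simp [h, yel_eq_yElt R n one_ne_zero]
  · rw [yel_eq_yElt R n h, yel_eq_yElt R n (Nat.succ_ne_zero k)]

theorem fel_eq_fElt (n : ℕ) (J : Finset ℕ) : fel R n J = fElt (pgen R n) n J := by
  rw [fel, fElt]
  split_ifs with h
  · rw [h, gElt_empty, Finset.card_empty, one_mul, zel_eq_zElt]
  · rw [gel_eq_gElt R n h, zel_eq_zElt]

theorem fel_complete_orthogonal_idempotents (n : ℕ) :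
    (∀ J ⊆ Finset.Icc 1 n, fel R n J * fel R n J = fel R n J) ∧
    (∀ J K : Finset ℕ, J ⊆ Finset.Icc 1 n → K ⊆ Finset.Icc 1 n → J ≠ K →
      fel R n J * fel R n K = 0) ∧
    (∑ J ∈ (Finset.Icc 1 n).powerset, fel R n J) = 1 := by
  have hp := ndpfRelations_pgen R n
  simp only [fel_eq_fElt]
  refine ⟨fun J hJ => ?_, fun J K hJ hK hJK => ?_, hp.sum_fElt n⟩
  · simpa using hp.fElt_mul_fElt hJ hJ
  · simpa [hJK] using hp.fElt_mul_fElt hJ hK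

end NDPFIdem
end
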